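/- arXiv:0707.1184 — 7 statements merged into one kernel-verified Lean document; each statement's English description precedes it below -/
import Mathlib

section
/- Let 0 < d < 2 and t₀ ∈ (0,1], and let ε : (0, t₀) → (0, ∞) be a continuous function such that t ↦ t^d·ε(t) is nondecreasing on (0, t₀), ε(t) → ∞ as t → 0⁺, and for every α > 0 one has t^α·ε(t) → 0 as t → 0⁺. Then there exist t₁ ∈ (0, t₀] and a continuous function ε̃ : (0, t₁) → (0, ∞) such that: ε̃(t) ≤ ε(t) for all t ∈ (0, t₁); ε̃ is strictly decreasing on (0, t₁); ε̃(t) → ∞ as t → 0⁺; for every α > 0, t^α·ε̃(t) → 0 as t → 0⁺; and t ↦ t^d·ε̃(t) is strictly increasing on (0, t₁). -/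
open Set Filter Topology

/-- Lemma 4.2: given `0 < d < 2`, `t₀ ∈ (0,1]` and a continuous `ε : (0,t₀) → (0,∞)` with
`t ↦ t^d·ε(t)` nondecreasing, `ε(t) → ∞` as `t → 0⁺`, and `t^α·ε(t) → 0` as `t → 0⁺` for all
`α > 0`, there exist `t₁ ∈ (0,t₀]` and a continuous `ε̃ : (0,t₁) → (0,∞)` with `ε̃ ≤ ε`,
`ε̃` strictly decreasing, `ε̃(t) → ∞`, `t^α·ε̃(t) → 0` for all `α > 0`, and `t ↦ t^d·ε̃(t)`
strictly increasing on `(0,t₁)`. -/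
theorem stmt8 (d t₀ : ℝ) (hd0 : 0 < d) (hd2 : d < 2) (ht₀0 : 0 < t₀) (ht₀1 : t₀ ≤ 1)
    (ε : ℝ → ℝ) (hεcont : ContinuousOn ε (Ioo 0 t₀))
    (hεpos : ∀ t ∈ Ioo 0 t₀, 0 < ε t)
    (hmono : MonotoneOn (fun t => t ^ d * ε t) (Ioo 0 t₀))
    (hlim : Tendsto ε (𝓝[>] 0) atTop)
    (hsmall : ∀ α : ℝ, 0 < α → Tendsto (fun t => t ^ α * ε t) (𝓝[>] 0) (𝓝 0)) :
    ∃ t₁ : ℝ, 0 < t₁ ∧ t₁ ≤ t₀ ∧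
      ∃ εt : ℝ → ℝ,
        ContinuousOn εt (Ioo 0 t₁) ∧
        (∀ t ∈ Ioo 0 t₁, 0 < εt t) ∧
        (∀ t ∈ Ioo 0 t₁, εt t ≤ ε t) ∧
        StrictAntiOn εt (Ioo 0 t₁) ∧
        Tendsto εt (𝓝[>] 0) atTop ∧
        (∀ α : ℝ, 0 < α → Tendsto (fun t => t ^ α * εt t) (𝓝[>] 0) (𝓝 0)) ∧
        StrictMonoOn (fun t => t ^ d * εt t) (Ioo 0 t₁) := by
  set T : ℝ := t₀ / 2 with hTdef
  have hT0 : 0 < T := by positivity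
  have hTt₀ : T < t₀ := by rw [hTdef]; linarith
  have hsub : Ioc 0 T ⊆ Ioo 0 t₀ := fun s hs => ⟨hs.1, lt_of_le_of_lt hs.2 hTt₀⟩
  have ha0 : (0:ℝ) < d/2 := by linarith
  -- positive lower bound on ε over Ioc 0 T
  obtain ⟨m, hm0, hm⟩ : ∃ m > 0, ∀ s ∈ Ioc (0:ℝ) T, m ≤ ε s := by
    have h1 := hlim.eventually (eventually_ge_atTop (1:ℝ))
    obtain ⟨δ, hδ, hδsub⟩ := mem_nhdsGT_iff_exists_Ioo_subset.1 h1
    have hδ0 : (0:ℝ) < δ := hδ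
    set δ' := min (δ/2) T with hδ'
    have hδ'0 : 0 < δ' := lt_min (by positivity) hT0
    have hδ'T : δ' ≤ T := min_le_right _ _
    have hsub2 : Icc δ' T ⊆ Ioo 0 t₀ := fun s hs =>
      ⟨lt_of_lt_of_le hδ'0 hs.1, lt_of_le_of_lt hs.2 hTt₀⟩
    obtain ⟨x, hx, hxmin⟩ := (isCompact_Icc (a := δ') (b := T)).exists_isMinOn
      (nonempty_Icc.2 hδ'T) (hεcont.mono hsub2)
    refine ⟨min 1 (ε x), lt_min one_pos (hεpos x (hsub2 hx)), fun s hs => ?_⟩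
    rcases lt_or_ge s δ' with h | h
    · exact le_trans (min_le_left _ _)
        (hδsub ⟨hs.1, lt_of_lt_of_le h (le_trans (min_le_left _ _) (by linarith))⟩)
    · exact le_trans (min_le_right _ _) (hxmin ⟨h, hs.2⟩)
  -- the construction
  set F : ℝ → ℝ → ℝ := fun t s => ε s * (max s t / t) ^ (d/2) with hF
  set e0 : ℝ → ℝ := fun t => sInf (F t '' Ioc 0 T) with he0
  have hεnn : ∀ s ∈ Ioc (0:ℝ) T, 0 < ε s := fun s hs => hεpos s (hsub hs)
  have hfac1 : ∀ t : ℝ, 0 < t → ∀ s ∈ Ioc (0:ℝ) T, 1 ≤ (max s t / t) ^ (d/2) := by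
    intro t ht s _
    exact Real.one_le_rpow ((one_le_div ht).2 (le_max_right _ _)) ha0.le
  have hlb : ∀ t : ℝ, 0 < t → ∀ y ∈ F t '' Ioc 0 T, m ≤ y := by
    rintro t ht y ⟨s, hs, rfl⟩
    calc m = m * 1 := (mul_one m).symm
    _ ≤ ε s * (max s t / t) ^ (d/2) :=
      mul_le_mul (hm s hs) (hfac1 t ht s hs) zero_le_one (hεnn s hs).le
  have hbdd : ∀ t : ℝ, 0 < t → BddBelow (F t '' Ioc 0 T) := fun t ht => ⟨m, hlb t ht⟩
  have hne : ∀ t : ℝ, (F t '' Ioc 0 T).Nonempty :=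
    fun t => ⟨F t T, ⟨T, ⟨hT0, le_refl T⟩, rfl⟩⟩
  have he0m : ∀ t : ℝ, 0 < t → m ≤ e0 t := fun t ht => le_csInf (hne t) (hlb t ht)
  have he0pos : ∀ t : ℝ, 0 < t → 0 < e0 t := fun t ht => lt_of_lt_of_le hm0 (he0m t ht)
  have he0le : ∀ t ∈ Ioo (0:ℝ) T, e0 t ≤ ε t := by
    intro t ht
    have : F t t = ε t := by
      rw [hF]; simp only [max_self, div_self ht.1.ne', Real.one_rpow, mul_one]
    exact this ▸ csInf_le (hbdd t ht.1) ⟨t, ⟨ht.1, ht.2.le⟩, rfl⟩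
  -- antitone
  have hanti : ∀ t₁ t₂ : ℝ, 0 < t₁ → t₁ ≤ t₂ → e0 t₂ ≤ e0 t₁ := by
    intro t₁ t₂ h1 h12
    have h2 : 0 < t₂ := lt_of_lt_of_le h1 h12
    refine le_csInf (hne t₁) ?_
    rintro y ⟨s, hs, rfl⟩
    refine le_trans (csInf_le (hbdd t₂ h2) ⟨s, hs, rfl⟩) ?_
    refine mul_le_mul_of_nonneg_left (Real.rpow_le_rpow (by positivity) ?_ ha0.le) (hεnn s hs).le
    rw [div_le_div_iff₀ h2 h1]
    rcases le_total s t₁ with h | h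
    · rw [max_eq_right h, max_eq_right (h.trans h12)]; nlinarith
    · rcases le_total s t₂ with h' | h'
      · rw [max_eq_right h', max_eq_left h]; nlinarith
      · rw [max_eq_left h', max_eq_left h]; nlinarith
  -- Lipschitz-type bound
  have hC : ∀ t₁ t₂ : ℝ, 0 < t₁ → t₁ ≤ t₂ → e0 t₁ ≤ (t₂/t₁) ^ (d/2) * e0 t₂ := by
    intro t₁ t₂ h1 h12
    have h2 : 0 < t₂ := lt_of_lt_of_le h1 h12
    have hCpos : (0:ℝ) < (t₂/t₁) ^ (d/2) := Real.rpow_pos_of_pos (by positivity) _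
    rw [← div_le_iff₀' hCpos]
    refine le_csInf (hne t₂) ?_
    rintro y ⟨s, hs, rfl⟩
    rw [div_le_iff₀' hCpos]
    refine le_trans (csInf_le (hbdd t₁ h1) ⟨s, hs, rfl⟩) ?_
    rw [hF]
    rw [mul_comm ((t₂/t₁) ^ (d/2)) _, mul_assoc, ← Real.mul_rpow (by positivity) (by positivity)]
    refine mul_le_mul_of_nonneg_left (Real.rpow_le_rpow (by positivity) ?_ ha0.le) (hεnn s hs).le
    rw [div_mul_div_comm]
    rw [div_le_div_iff₀ h1 (by positivity)]
    have hmm : max s t₁ ≤ max s t₂ := max_le_max (le_refl s) h12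
    nlinarith [mul_le_mul_of_nonneg_right hmm (mul_pos h2 h1).le]
  have hmulinv : ∀ u v : ℝ, 0 < u → 0 < v → (u/v) ^ (d/2) * (v/u) ^ (d/2) = 1 := by
    intro u v hu hv
    rw [← Real.mul_rpow (by positivity) (by positivity)]
    have : u/v * (v/u) = 1 := by field_simp
    rw [this, Real.one_rpow]
  have hkey : ∀ u v : ℝ, 0 < u → u ≤ v → e0 u * (u/v) ^ (d/2) ≤ e0 v := by
    intro u v hu huv
    have hv : 0 < v := lt_of_lt_of_le hu huv
    calc e0 u * (u/v) ^ (d/2) ≤ ((v/u) ^ (d/2) * e0 v) * (u/v) ^ (d/2) :=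
          mul_le_mul_of_nonneg_right (hC u v hu huv) (by positivity)
      _ = e0 v * ((u/v) ^ (d/2) * (v/u) ^ (d/2)) := by ring
      _ = e0 v := by rw [hmulinv u v hu hv, mul_one]
  -- continuity of e0
  have hcont : ContinuousOn e0 (Ioo 0 T) := by
    intro t ht
    have ht0 : 0 < t := ht.1
    rw [ContinuousWithinAt]
    have hclow : ContinuousAt (fun t' => e0 t * (min t t' / max t t') ^ (d/2)) t := by
      refine continuousAt_const.mul (ContinuousAt.rpow_const ?_ (Or.inr ha0.le))
      exact (continuousAt_const.min continuousAt_id).div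
        (continuousAt_const.max continuousAt_id) (by simp [ht0.ne'])
    have hchigh : ContinuousAt (fun t' => e0 t * (max t t' / min t t') ^ (d/2)) t := by
      refine continuousAt_const.mul (ContinuousAt.rpow_const ?_ (Or.inr ha0.le))
      exact (continuousAt_const.max continuousAt_id).div
        (continuousAt_const.min continuousAt_id) (by simp [ht0.ne'])
    have hval : e0 t * (max t t / min t t) ^ (d/2) = e0 t := by
      simp [div_self ht0.ne']
    have hval2 : e0 t * (min t t / max t t) ^ (d/2) = e0 t := by
      simp [div_self ht0.ne']
    refine tendsto_of_tendsto_of_tendsto_of_le_of_le'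
      (hval2 ▸ hclow.tendsto.mono_left nhdsWithin_le_nhds)
      (hval ▸ hchigh.tendsto.mono_left nhdsWithin_le_nhds) ?_ ?_
    · filter_upwards [eventually_mem_nhdsWithin] with t' ht'
      have ht'0 : (0:ℝ) < t' := ht'.1
      rcases le_total t' t with h | h
      · rw [min_eq_right h, max_eq_left h]
        calc e0 t * (t'/t) ^ (d/2) ≤ e0 t * 1 := by
              refine mul_le_mul_of_nonneg_left ?_ (he0pos t ht0).le
              exact Real.rpow_le_one (by positivity) ((div_le_one ht0).2 h) ha0.le
          _ = e0 t := mul_one _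
          _ ≤ e0 t' := hanti t' t ht'0 h
      · rw [min_eq_left h, max_eq_right h]
        exact hkey t t' ht0 h
    · filter_upwards [eventually_mem_nhdsWithin] with t' ht'
      have ht'0 : (0:ℝ) < t' := ht'.1
      rcases le_total t' t with h | h
      · rw [max_eq_left h, min_eq_right h]
        calc e0 t' ≤ (t/t') ^ (d/2) * e0 t := hC t' t ht'0 h
          _ = e0 t * (t/t') ^ (d/2) := mul_comm _ _
      · rw [max_eq_right h, min_eq_left h]
        calc e0 t' ≤ e0 t := hanti t t' ht0 h
          _ ≤ e0 t * (t'/t) ^ (d/2) := le_mul_of_one_le_right (he0pos t ht0).le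
              (Real.one_le_rpow ((one_le_div ht0).2 h) ha0.le)
  -- e0 tends to infinity
  have hD : Tendsto e0 (𝓝[>] 0) atTop := by
    rw [tendsto_atTop]
    intro M
    obtain ⟨δ, hδ, hδsub⟩ := mem_nhdsGT_iff_exists_Ioo_subset.1
      (hlim.eventually (eventually_ge_atTop M))
    have hδ0 : (0:ℝ) < δ := hδ
    set δ' := min (δ/2) T with hδ'def
    have hδ'0 : 0 < δ' := lt_min (by positivity) hT0
    have hδ'δ : δ' < δ := lt_of_le_of_lt (min_le_left _ _) (by linarith)
    set K := max (M/m) 1 with hKdef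
    have hK1 : (1:ℝ) ≤ K := le_max_right _ _
    have hK0 : (0:ℝ) < K := lt_of_lt_of_le one_pos hK1
    have hKa : (1:ℝ) ≤ K ^ (2/d) := Real.one_le_rpow hK1 (by positivity)
    have hKa0 : (0:ℝ) < K ^ (2/d) := lt_of_lt_of_le one_pos hKa
    set τ := δ' / K ^ (2/d) with hτdef
    have hτ0 : 0 < τ := by positivity
    filter_upwards [Ioo_mem_nhdsGT_of_mem ⟨le_refl (0:ℝ), hτ0⟩] with t htmem
    have ht0 : 0 < t := htmem.1
    refine le_csInf (hne t) ?_
    rintro y ⟨s, hs, rfl⟩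
    rcases lt_or_ge s δ' with hsδ | hsδ
    · calc M ≤ ε s := hδsub ⟨hs.1, hsδ.trans hδ'δ⟩
        _ ≤ ε s * (max s t / t) ^ (d/2) :=
          le_mul_of_one_le_right (hεnn s hs).le (hfac1 t ht0 s hs)
    · have hfactor : K ≤ (max s t / t) ^ (d/2) := by
        have h1 : K ^ (2/d) ≤ max s t / t := by
          rw [le_div_iff₀ ht0]
          calc K ^ (2/d) * t ≤ K ^ (2/d) * τ := by
                exact mul_le_mul_of_nonneg_left htmem.2.le hKa0.le
            _ = δ' := by rw [hτdef]; field_simp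
            _ ≤ s := hsδ
            _ ≤ max s t := le_max_left _ _
        calc K = (K ^ (2/d)) ^ (d/2) := by
              rw [← Real.rpow_mul hK0.le]
              rw [div_mul_div_comm]
              norm_num
              rw [mul_comm, div_self (by positivity), Real.rpow_one]
          _ ≤ (max s t / t) ^ (d/2) := Real.rpow_le_rpow hKa0.le h1 ha0.le
      calc M ≤ m * K := by
            rcases le_or_gt M m with h | h
            · calc M ≤ m := h
                _ = m * 1 := (mul_one m).symm
                _ ≤ m * K := mul_le_mul_of_nonneg_left hK1 hm0.le
            · calc M = m * (M/m) := by field_simp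
                _ ≤ m * K := mul_le_mul_of_nonneg_left (le_max_left _ _) hm0.le
        _ ≤ ε s * (max s t / t) ^ (d/2) :=
            mul_le_mul (hm s hs) hfactor hK0.le (hεnn s hs).le
  -- facts about the correction factor
  have hb0 : (0:ℝ) < d/4 := by linarith
  have hfb_pos : ∀ t : ℝ, 0 ≤ t → 0 < (1+t) ^ (-(d/4)) :=
    fun t ht => Real.rpow_pos_of_pos (by linarith) _
  have hfb_le1 : ∀ t : ℝ, 0 ≤ t → (1+t) ^ (-(d/4)) ≤ 1 :=
    fun t ht => Real.rpow_le_one_of_one_le_of_nonpos (by linarith) (by linarith)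
  have hfb_anti : ∀ x y : ℝ, 0 ≤ x → x < y → (1+y) ^ (-(d/4)) < (1+x) ^ (-(d/4)) := by
    intro x y hx hxy
    rw [Real.rpow_neg (by linarith), Real.rpow_neg (by linarith)]
    exact inv_strictAnti₀ (Real.rpow_pos_of_pos (by linarith) _)
      (Real.rpow_lt_rpow (by linarith) (by linarith) hb0)
  -- key strict monotonicity of t^(d/2)*(1+t)^(-(d/4))
  have hr : ∀ t : ℝ, 0 < t → (t*t/(1+t)) ^ (d/4) = t ^ (d/2) * (1+t) ^ (-(d/4)) := by
    intro t ht
    rw [Real.div_rpow (by positivity) (by positivity),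
      Real.mul_rpow ht.le ht.le, ← Real.rpow_add ht,
      Real.rpow_neg (by positivity), div_eq_mul_inv,
      show d/4+d/4 = d/2 by ring]
  have hmonoKey : ∀ x y : ℝ, 0 < x → x < y →
      x ^ (d/2) * (1+x) ^ (-(d/4)) < y ^ (d/2) * (1+y) ^ (-(d/4)) := by
    intro x y hx hxy
    have hy : 0 < y := hx.trans hxy
    rw [← hr x hx, ← hr y hy]
    refine Real.rpow_lt_rpow (by positivity) ?_ hb0
    rw [div_lt_div_iff₀ (by positivity) (by positivity)]
    nlinarith [mul_pos hx hy, mul_pos (mul_pos hx hy) (sub_pos.2 hxy),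
      mul_pos (sub_pos.2 hxy) (add_pos hx hy)]
  -- assembly
  refine ⟨T, hT0, by rw [hTdef]; linarith, fun t => e0 t * (1+t) ^ (-(d/4)),
    ?_, ?_, ?_, ?_, ?_, ?_, ?_⟩
  · exact hcont.mul (ContinuousOn.rpow_const
      ((continuous_const.add continuous_id).continuousOn)
      (fun t ht => Or.inl (ne_of_gt (by linarith [ht.1]))))
  · exact fun t ht => mul_pos (he0pos t ht.1) (hfb_pos t ht.1.le)
  · intro t ht
    calc e0 t * (1+t) ^ (-(d/4)) ≤ e0 t * 1 :=
          mul_le_mul_of_nonneg_left (hfb_le1 t ht.1.le) (he0pos t ht.1).le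
      _ = e0 t := mul_one _
      _ ≤ ε t := he0le t ht
  · intro x hx y hy hxy
    calc e0 y * (1+y) ^ (-(d/4)) ≤ e0 x * (1+y) ^ (-(d/4)) :=
          mul_le_mul_of_nonneg_right (hanti x y hx.1 hxy.le) (hfb_pos y hy.1.le).le
      _ < e0 x * (1+x) ^ (-(d/4)) :=
          mul_lt_mul_of_pos_left (hfb_anti x y hx.1.le hxy) (he0pos x hx.1)
  · refine tendsto_atTop_mono' _ ?_ (hD.const_mul_atTop (hfb_pos T hT0.le))
    filter_upwards [Ioo_mem_nhdsGT_of_mem ⟨le_refl (0:ℝ), hT0⟩] with t ht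
    have ht1 : (0:ℝ) < t := ht.1
    have ht2 : t < T := ht.2
    calc (1+T) ^ (-(d/4)) * e0 t ≤ (1+t) ^ (-(d/4)) * e0 t := by
          refine mul_le_mul_of_nonneg_right ?_ (he0pos t ht1).le
          rw [Real.rpow_neg (by linarith), Real.rpow_neg (by linarith)]
          refine inv_anti₀ (Real.rpow_pos_of_pos (by linarith) _) ?_
          exact Real.rpow_le_rpow (by linarith) (by linarith) hb0.le
      _ = e0 t * (1+t) ^ (-(d/4)) := mul_comm _ _
  · intro α hα
    refine tendsto_of_tendsto_of_tendsto_of_le_of_le' tendsto_const_nhds (hsmall α hα) ?_ ?_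
    · filter_upwards [Ioo_mem_nhdsGT_of_mem ⟨le_refl (0:ℝ), hT0⟩] with t ht
      exact (mul_pos (Real.rpow_pos_of_pos ht.1 α)
        (mul_pos (he0pos t ht.1) (hfb_pos t ht.1.le))).le
    · filter_upwards [Ioo_mem_nhdsGT_of_mem ⟨le_refl (0:ℝ), hT0⟩] with t ht
      refine mul_le_mul_of_nonneg_left ?_ (Real.rpow_nonneg ht.1.le α)
      calc e0 t * (1+t) ^ (-(d/4)) ≤ e0 t * 1 :=
            mul_le_mul_of_nonneg_left (hfb_le1 t ht.1.le) (he0pos t ht.1).le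
        _ = e0 t := mul_one _
        _ ≤ ε t := he0le t ht
  · intro x hx y hy hxy
    have hx0 : 0 < x := hx.1
    have hy0 : 0 < y := hy.1
    have key : e0 x * (x/y) ^ (d/2) ≤ e0 y := hkey x y hx0 hxy.le
    have hdiv2 : x ^ (d/2) = (x/y) ^ (d/2) * y ^ (d/2) := by
      rw [Real.div_rpow hx0.le hy0.le, div_mul_cancel₀]
      exact (Real.rpow_pos_of_pos hy0 _).ne'
    have hxd : x ^ d = x ^ (d/2) * x ^ (d/2) := by
      rw [← Real.rpow_add hx0]; norm_num
    have hyd : y ^ d = y ^ (d/2) * y ^ (d/2) := by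
      rw [← Real.rpow_add hy0]; norm_num
    have h1 : (0:ℝ) < x ^ (d/2) * e0 x :=
      mul_pos (Real.rpow_pos_of_pos hx0 _) (he0pos x hx0)
    show x ^ d * (e0 x * (1+x) ^ (-(d/4))) < y ^ d * (e0 y * (1+y) ^ (-(d/4)))
    calc x ^ d * (e0 x * (1+x) ^ (-(d/4)))
        = (x ^ (d/2) * e0 x) * (x ^ (d/2) * (1+x) ^ (-(d/4))) := by rw [hxd]; ring
      _ < (x ^ (d/2) * e0 x) * (y ^ (d/2) * (1+y) ^ (-(d/4))) :=
          mul_lt_mul_of_pos_left (hmonoKey x y hx0 hxy) h1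
      _ = (e0 x * (x/y) ^ (d/2)) * (y ^ d * (1+y) ^ (-(d/4))) := by
          rw [hdiv2, hyd]; ring
      _ ≤ e0 y * (y ^ d * (1+y) ^ (-(d/4))) := by
          refine mul_le_mul_of_nonneg_right key ?_
          have := hfb_pos y hy0.le
          positivity
      _ = y ^ d * (e0 y * (1+y) ^ (-(d/4))) := by ring
end

section
/- Let 0 < d < 2 and K > 1 be real numbers, let t₀ ∈ (0,1), and let ε : (0, t₀) → (0, ∞) be a continuous function such that t ↦ t^d·ε(t) is nondecreasing on (0, t₀), ε(t) → 0 as t → 0⁺, and for every α > 0 one has t^α/ε(t) → 0 as t → 0⁺. Then there exist t₁ ∈ (0, t₀], a constant C > 0, and a continuous strictly increasing function ε̃ : (0, t₁) → (0, ∞) such that: ε(t) ≤ ε̃(t) for all t ∈ (0, t₁); ε̃(t) → 0 as t → 0⁺; for every α > 0, t^α/ε̃(t) → 0 as t → 0⁺; the function t ↦ ε̃(t)^{1/(2−d)}/t is nonincreasing on (0, t₁); and ε̃(t) ≤ C·ε̃(t^K) for all t ∈ (0, t₁). -/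
/-!
Pass to the variable `x = -log t` and put `ψ x = ε (exp (-x))`. The function
`φ x = ⨆ z > a, ψ z * min 1 (z / x)` is the least majorant of `ψ` that is antitone while
`x * φ x` is monotone; take `ε̃ t = φ x + x⁻¹`, the summand `x⁻¹` making it strictly monotone and
positive. Those two monotonicity properties carry everything: they force continuity, they give
`φ x ≤ K * φ (K * x)`, i.e. `ε̃ t ≤ K * ε̃ (t ^ K)`, and for `x ≥ 1 / (2 - d)` they make
`ε̃ t / t ^ (2 - d) = (x * ε̃ t) * (exp ((2 - d) * x) / x)` nondecreasing in `x`. Since `ψ` is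
bounded and tends to `0`, so does `φ`, and `ε ≤ ε̃` transfers `t ^ α / ε t → 0` to `ε̃`.
-/

open Set Filter Topology Real

noncomputable def slowMajorant (ψ : ℝ → ℝ) (a x : ℝ) : ℝ :=
  ⨆ z : Ioi a, ψ z * min 1 (z / x)

section SlowMajorant

variable {ψ : ℝ → ℝ} {a M x : ℝ}

lemma bddAbove_slowMajorant_terms (hψ0 : ∀ z, a < z → 0 ≤ ψ z) (hψM : ∀ z, a < z → ψ z ≤ M)
    (x : ℝ) :
    BddAbove (range fun z : Ioi a => ψ z * min 1 (z / x)) := by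
  refine ⟨M, ?_⟩
  rintro _ ⟨z, rfl⟩
  exact (mul_le_of_le_one_right (hψ0 z z.2) (min_le_left _ _)).trans (hψM z z.2)

lemma slowMajorant_nonneg (ha : 0 ≤ a) (hψ0 : ∀ z, a < z → 0 ≤ ψ z) (hx : 0 ≤ x) :
    0 ≤ slowMajorant ψ a x :=
  Real.iSup_nonneg fun z =>
    mul_nonneg (hψ0 z z.2) (le_min zero_le_one (div_nonneg (ha.trans z.2.le) hx))

lemma le_slowMajorant (hψ0 : ∀ z, a < z → 0 ≤ ψ z) (hψM : ∀ z, a < z → ψ z ≤ M) (hx : a < x)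
    (hx0 : x ≠ 0) : ψ x ≤ slowMajorant ψ a x := by
  have := le_ciSup (bddAbove_slowMajorant_terms hψ0 hψM x) ⟨x, hx⟩
  simpa [slowMajorant, div_self hx0] using this

lemma antitoneOn_slowMajorant (ha : 0 ≤ a) (hψ0 : ∀ z, a < z → 0 ≤ ψ z)
    (hψM : ∀ z, a < z → ψ z ≤ M) :
    AntitoneOn (slowMajorant ψ a) (Ioi 0) := by
  intro x hx y _ hxy
  refine ciSup_mono (bddAbove_slowMajorant_terms hψ0 hψM x) fun z => ?_
  have hz : 0 ≤ (z : ℝ) := ha.trans z.2.le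
  have := hψ0 z z.2
  gcongr

lemma monotoneOn_mul_slowMajorant (hψ0 : ∀ z, a < z → 0 ≤ ψ z) (hψM : ∀ z, a < z → ψ z ≤ M) :
    MonotoneOn (fun x => x * slowMajorant ψ a x) (Ioi 0) := by
  intro x (hx : 0 < x) y (hy : 0 < y) hxy
  suffices slowMajorant ψ a x ≤ y / x * slowMajorant ψ a y by
    rwa [div_mul_eq_mul_div, le_div_iff₀' hx] at this
  refine ciSup_le fun z => ?_
  have hmin : min 1 (z / x) ≤ y / x * min 1 (z / y) := by
    have hzx : y / x * (z / y) = z / x := by field_simp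
    rw [mul_min_of_nonneg _ _ (by positivity), mul_one, hzx]
    exact min_le_min_right _ ((one_le_div hx).2 hxy)
  calc ψ z * min 1 (z / x) ≤ ψ z * (y / x * min 1 (z / y)) :=
        mul_le_mul_of_nonneg_left hmin (hψ0 z z.2)
    _ = y / x * (ψ z * min 1 (z / y)) := by ring
    _ ≤ y / x * slowMajorant ψ a y :=
        mul_le_mul_of_nonneg_left (le_ciSup (bddAbove_slowMajorant_terms hψ0 hψM y) z)
          (by positivity)

lemma tendsto_slowMajorant_atTop (ha : 0 ≤ a) (hψ0 : ∀ z, a < z → 0 ≤ ψ z)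
    (hψM : ∀ z, a < z → ψ z ≤ M) (hψ : Tendsto ψ atTop (𝓝 0)) :
    Tendsto (slowMajorant ψ a) atTop (𝓝 0) := by
  refine tendsto_order.2 ⟨fun l hl => ?_, fun δ hδ => ?_⟩
  · filter_upwards [eventually_ge_atTop 0] with x hx
    exact hl.trans_le (slowMajorant_nonneg ha hψ0 hx)
  obtain ⟨Z, hZ⟩ := eventually_atTop.1 (hψ.eventually (gt_mem_nhds (half_pos hδ)))
  have hM : 0 ≤ M := (hψ0 _ (lt_add_one a)).trans (hψM _ (lt_add_one a))
  have hMZ : Tendsto (fun x => M * Z / x) atTop (𝓝 0) := tendsto_const_nhds.div_atTop tendsto_id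
  filter_upwards [hMZ.eventually (gt_mem_nhds hδ), eventually_gt_atTop 0] with x hxZ hx
  refine lt_of_le_of_lt (ciSup_le fun z => ?_) (max_lt (half_lt_self hδ) hxZ)
  -- Far out `ψ` is small; below `Z` the factor `min 1 (z / x)` is small.
  rcases le_or_gt Z z with hz | hz
  · exact le_max_of_le_left <|
      (mul_le_of_le_one_right (hψ0 z z.2) (min_le_left _ _)).trans (hZ z hz).le
  · refine le_max_of_le_right ?_
    rw [mul_div_assoc]
    exact mul_le_mul (hψM z z.2) ((min_le_right _ _).trans (by gcongr))
      (le_min zero_le_one (div_nonneg (ha.trans z.2.le) hx.le)) hM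

end SlowMajorant

theorem exists_strictAntiOn_majorant {ψ : ℝ → ℝ} {a M : ℝ} (ha : 0 ≤ a)
    (hψ0 : ∀ z, a < z → 0 ≤ ψ z) (hψM : ∀ z, a < z → ψ z ≤ M) (hψ : Tendsto ψ atTop (𝓝 0)) :
    ∃ g : ℝ → ℝ, (∀ x, a < x → ψ x ≤ g x) ∧ (∀ x, 0 < x → 0 < g x) ∧
      StrictAntiOn g (Ioi 0) ∧ MonotoneOn (fun x => x * g x) (Ioi 0) ∧
      Tendsto g atTop (𝓝 0) := by
  refine ⟨fun x => slowMajorant ψ a x + x⁻¹, fun x hx => ?_, fun x hx => ?_, ?_, ?_, ?_⟩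
  · have hx0 : 0 < x := ha.trans_lt hx
    exact le_add_of_le_of_nonneg (le_slowMajorant hψ0 hψM hx hx0.ne') (inv_pos.2 hx0).le
  · exact add_pos_of_nonneg_of_pos (slowMajorant_nonneg ha hψ0 hx.le) (inv_pos.2 hx)
  · intro x hx y hy hxy
    exact add_lt_add_of_le_of_lt (antitoneOn_slowMajorant ha hψ0 hψM hx hy hxy.le)
      (inv_strictAnti₀ hx hxy)
  · intro x (hx : 0 < x) y (hy : 0 < y) hxy
    have := monotoneOn_mul_slowMajorant hψ0 hψM hx hy hxy
    simp only [mul_add, mul_inv_cancel₀ hx.ne', mul_inv_cancel₀ hy.ne']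
    linarith
  · simpa using (tendsto_slowMajorant_atTop ha hψ0 hψM hψ).add tendsto_inv_atTop_zero

section AntitoneMulMonotone

variable {f : ℝ → ℝ}

theorem continuousOn_of_antitoneOn_of_monotoneOn_mul (hf : AntitoneOn f (Ioi 0))
    (hmul : MonotoneOn (fun x => x * f x) (Ioi 0)) : ContinuousOn f (Ioi 0) := by
  refine continuousOn_of_forall_continuousAt fun a (ha : 0 < a) => ?_
  have hbounds : ∀ x, 0 < x → min (f a) (a * f a / x) ≤ f x ∧ f x ≤ max (f a) (a * f a / x) := by
    intro x hx
    rcases le_total x a with hxa | hax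
    · exact ⟨(min_le_left _ _).trans (hf hx ha hxa),
        le_max_of_le_right ((le_div_iff₀' hx).2 (hmul hx ha hxa))⟩
    · exact ⟨(min_le_right _ _).trans ((div_le_iff₀' hx).2 (hmul ha hx hax)),
        (hf ha hx hax).trans (le_max_left _ _)⟩
  have hfa : a * f a / a = f a := mul_div_cancel_left₀ (f a) ha.ne'
  have hcont : ContinuousAt (fun x => a * f a / x) a :=
    continuousAt_const.div continuousAt_id ha.ne'
  have hmin : ContinuousAt (fun x => min (f a) (a * f a / x)) a := continuousAt_const.min hcont
  have hmax : ContinuousAt (fun x => max (f a) (a * f a / x)) a := continuousAt_const.max hcont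
  have hlo := hmin.tendsto
  have hhi := hmax.tendsto
  simp only [hfa, min_self, max_self] at hlo hhi
  exact tendsto_of_tendsto_of_tendsto_of_le_of_le' hlo hhi
    (by filter_upwards [Ioi_mem_nhds ha] with x hx using (hbounds x hx).1)
    (by filter_upwards [Ioi_mem_nhds ha] with x hx using (hbounds x hx).2)

theorem le_mul_apply_mul_of_monotoneOn_mul (hmul : MonotoneOn (fun x => x * f x) (Ioi 0))
    {K x : ℝ} (hK : 1 ≤ K) (hx : 0 < x) : f x ≤ K * f (K * x) := by
  have hKx : 0 < K * x := by positivity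
  exact le_of_mul_le_mul_left
    ((hmul hx hKx (le_mul_of_one_le_left hx.le hK)).trans_eq (by ring)) hx

theorem monotoneOn_exp_mul_div {c : ℝ} (hc : 0 < c) :
    MonotoneOn (fun x => exp (c * x) / x) (Ici c⁻¹) := by
  intro x (hx : c⁻¹ ≤ x) y (hy : c⁻¹ ≤ y) hxy
  have hx0 : 0 < x := (inv_pos.2 hc).trans_le hx
  have hcx : 1 ≤ c * x := by rwa [inv_le_iff_one_le_mul₀ hc, mul_comm] at hx
  have hexp : exp (c * y) = exp (c * x) * exp (c * (y - x)) := by rw [← exp_add]; ring_nf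
  have hyx : y ≤ exp (c * (y - x)) * x :=
    calc y ≤ (c * (y - x) + 1) * x := by
          nlinarith [mul_nonneg (sub_nonneg.2 hxy) (sub_nonneg.2 hcx)]
      _ ≤ exp (c * (y - x)) * x := by gcongr; exact add_one_le_exp _
  rw [div_le_div_iff₀ hx0 (hx0.trans_le hxy), hexp, mul_assoc]
  exact mul_le_mul_of_nonneg_left hyx (exp_pos _).le

theorem monotoneOn_mul_exp_of_monotoneOn_mul {c : ℝ} (hc : 0 < c) (hf0 : ∀ x, 0 < x → 0 ≤ f x)
    (hmul : MonotoneOn (fun x => x * f x) (Ioi 0)) :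
    MonotoneOn (fun x => f x * exp (c * x)) (Ici c⁻¹) := by
  have hpos : ∀ x ∈ Ici c⁻¹, 0 < x := fun x hx => (inv_pos.2 hc).trans_le hx
  have hprod := (hmul.mono fun x hx => hpos x hx).mul (monotoneOn_exp_mul_div hc)
    (fun x hx => mul_nonneg (hpos x hx).le (hf0 x (hpos x hx)))
    (fun x hx => div_nonneg (exp_pos _).le (hpos x hx).le)
  refine hprod.congr fun x hx => ?_
  simp only [Pi.mul_apply]
  field_simp [(hpos x hx).ne']

end AntitoneMulMonotone

section NegLog

variable {a : ℝ}

theorem lt_neg_log_of_mem_Ioo {t : ℝ} (ht : t ∈ Ioo 0 (exp (-a))) : a < -log t := by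
  have := (log_lt_log ht.1 ht.2).trans_eq (log_exp _)
  linarith

theorem StrictAntiOn.strictMonoOn_comp_neg_log {g : ℝ → ℝ} (hg : StrictAntiOn g (Ioi a)) :
    StrictMonoOn (fun t => g (-log t)) (Ioo 0 (exp (-a))) :=
  fun _ hs _ ht hst => hg (lt_neg_log_of_mem_Ioo ht) (lt_neg_log_of_mem_Ioo hs)
    (neg_lt_neg (log_lt_log hs.1 hst))

theorem antitoneOn_rpow_div_comp_neg_log {g : ℝ → ℝ} {c : ℝ} (hc : 0 < c)
    (hg0 : ∀ x, a < x → 0 ≤ g x) (hg : MonotoneOn (fun x => g x * exp (c * x)) (Ioi a)) :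
    AntitoneOn (fun t => g (-log t) ^ (1 / c) / t) (Ioo 0 (exp (-a))) := by
  have key : ∀ t ∈ Ioo 0 (exp (-a)),
      g (-log t) ^ (1 / c) / t = (g (-log t) * exp (c * -log t)) ^ (1 / c) := by
    intro t ht
    have hc' : c * -log t * (1 / c) = -log t := by field_simp
    rw [mul_rpow (hg0 _ (lt_neg_log_of_mem_Ioo ht)) (exp_pos _).le, ← exp_mul, hc', exp_neg,
      exp_log ht.1, div_eq_mul_inv]
  intro s hs t ht hst
  simp only [key s hs, key t ht]
  exact rpow_le_rpow (mul_nonneg (hg0 _ (lt_neg_log_of_mem_Ioo ht)) (exp_pos _).le)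
    (hg (lt_neg_log_of_mem_Ioo ht) (lt_neg_log_of_mem_Ioo hs) (neg_le_neg (log_le_log hs.1 hst)))
    (by positivity)

end NegLog

theorem tendsto_div_of_le_of_tendsto_div {α : Type*} {l : Filter α} {u f g : α → ℝ}
    (hu : ∀ᶠ x in l, 0 ≤ u x) (hf : ∀ᶠ x in l, 0 < f x) (hfg : ∀ᶠ x in l, f x ≤ g x)
    (h : Tendsto (fun x => u x / f x) l (𝓝 0)) : Tendsto (fun x => u x / g x) l (𝓝 0) :=
  tendsto_of_tendsto_of_tendsto_of_le_of_le' tendsto_const_nhds h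
    (by filter_upwards [hu, hf, hfg] with x hu hf hfg using div_nonneg hu (hf.trans_le hfg).le)
    (by filter_upwards [hu, hf, hfg] with x hu hf hfg using div_le_div_of_nonneg_left hu hf hfg)

theorem stmt9_general (d K t₀ : ℝ) (hd2 : d < 2) (hK : 1 < K)
    (ht₀0 : 0 < t₀)
    (ε : ℝ → ℝ)
    (hεpos : ∀ t ∈ Ioo 0 t₀, 0 < ε t)
    (hlim : Tendsto ε (𝓝[>] 0) (𝓝 0))
    (hsmall : ∀ α : ℝ, 0 < α → Tendsto (fun t => t ^ α / ε t) (𝓝[>] 0) (𝓝 0)) :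
    ∃ t₁ : ℝ, 0 < t₁ ∧ t₁ ≤ t₀ ∧
      ∃ C : ℝ, 0 < C ∧
        ∃ εt : ℝ → ℝ,
          ContinuousOn εt (Ioo 0 t₁) ∧
          StrictMonoOn εt (Ioo 0 t₁) ∧
          (∀ t ∈ Ioo 0 t₁, 0 < εt t) ∧
          (∀ t ∈ Ioo 0 t₁, ε t ≤ εt t) ∧
          Tendsto εt (𝓝[>] 0) (𝓝 0) ∧
          (∀ α : ℝ, 0 < α → Tendsto (fun t => t ^ α / εt t) (𝓝[>] 0) (𝓝 0)) ∧
          AntitoneOn (fun t => εt t ^ (1 / (2 - d)) / t) (Ioo 0 t₁) ∧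
          (∀ t ∈ Ioo 0 t₁, εt t ≤ C * εt (t ^ K)) := by
  have hc : 0 < 2 - d := by linarith
  have hψ : Tendsto (fun x => ε (exp (-x))) atTop (𝓝 0) := hlim.comp <|
    tendsto_nhdsWithin_iff.2 ⟨tendsto_exp_neg_atTop_nhds_zero, .of_forall fun _ => exp_pos _⟩
  obtain ⟨a, ha⟩ := eventually_atTop.1 <| (hψ.eventually (gt_mem_nhds one_pos)).and <|
    (eventually_ge_atTop (2 - d)⁻¹).and (eventually_ge_atTop (-log t₀))
  obtain ⟨-, hac, hat₀⟩ := ha a le_rfl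
  have ha0 : 0 < a := (inv_pos.2 hc).trans_le hac
  have ht₁ : exp (-a) ≤ t₀ := by rw [← exp_log ht₀0]; exact exp_le_exp.2 (by linarith)
  have hmem : ∀ t ∈ Ioo 0 (exp (-a)), t ∈ Ioo 0 t₀ := fun t ht => ⟨ht.1, ht.2.trans_le ht₁⟩
  have hψpos : ∀ x, a < x → 0 < ε (exp (-x)) := fun x hx =>
    hεpos _ (hmem _ ⟨exp_pos _, exp_lt_exp.2 (neg_lt_neg hx)⟩)
  obtain ⟨g, hψg, hg0, hg_anti, hg_mul, hg_lim⟩ := exists_strictAntiOn_majorant ha0.le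
    (fun x hx => (hψpos x hx).le) (fun x hx => (ha x hx.le).1.le) hψ
  have hεg : ∀ t ∈ Ioo 0 (exp (-a)), ε t ≤ g (-log t) := fun t ht => by
    simpa [exp_log ht.1] using hψg _ (lt_neg_log_of_mem_Ioo ht)
  have hnear : Ioo 0 (exp (-a)) ∈ 𝓝[>] (0 : ℝ) := Ioo_mem_nhdsGT (exp_pos _)
  refine ⟨exp (-a), exp_pos _, ht₁, K, by linarith, fun t => g (-log t), ?_,
    (hg_anti.mono fun x hx => ha0.trans hx).strictMonoOn_comp_neg_log,
    fun t ht => hg0 _ (ha0.trans (lt_neg_log_of_mem_Ioo ht)), hεg,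
    hg_lim.comp (tendsto_neg_atBot_atTop.comp tendsto_log_nhdsGT_zero), fun α hα => ?_,
    antitoneOn_rpow_div_comp_neg_log hc (fun x hx => (hg0 x (ha0.trans hx)).le)
      ((monotoneOn_mul_exp_of_monotoneOn_mul hc (fun x hx => (hg0 x hx).le) hg_mul).mono
        fun x hx => hac.trans hx.le), fun t ht => ?_⟩
  · exact (continuousOn_of_antitoneOn_of_monotoneOn_mul hg_anti.antitoneOn hg_mul).comp
      (continuousOn_log.mono fun t ht => ht.1.ne').neg
      fun t ht => ha0.trans (lt_neg_log_of_mem_Ioo ht)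
  · refine tendsto_div_of_le_of_tendsto_div ?_ ?_ ?_ (hsmall α hα) <;>
      filter_upwards [hnear] with t ht
    exacts [(rpow_pos_of_pos ht.1 α).le, hεpos t (hmem t ht), hεg t ht]
  · simp only [log_rpow ht.1, ← mul_neg]
    exact le_mul_apply_mul_of_monotoneOn_mul hg_mul hK.le (ha0.trans (lt_neg_log_of_mem_Ioo ht))

/-- Lemma 4.3: given `0 < d < 2`, `K > 1`, `t₀ ∈ (0,1)` and a continuous
`ε : (0,t₀) → (0,∞)` with `t ↦ t^d·ε(t)` nondecreasing, `ε(t) → 0` as `t → 0⁺`, and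
`t^α/ε(t) → 0` as `t → 0⁺` for all `α > 0`, there exist `t₁ ∈ (0,t₀]`, a constant `C > 0`
and a continuous strictly increasing `ε̃ : (0,t₁) → (0,∞)` with `ε ≤ ε̃`, `ε̃(t) → 0`,
`t^α/ε̃(t) → 0` for all `α > 0`, `t ↦ ε̃(t)^(1/(2-d))/t` nonincreasing, and the
logarithmic-type condition `ε̃(t) ≤ C·ε̃(t^K)` on `(0,t₁)`. -/
theorem stmt9 (d K t₀ : ℝ) (hd0 : 0 < d) (hd2 : d < 2) (hK : 1 < K)
    (ht₀0 : 0 < t₀) (ht₀1 : t₀ < 1)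
    (ε : ℝ → ℝ) (hεcont : ContinuousOn ε (Ioo 0 t₀))
    (hεpos : ∀ t ∈ Ioo 0 t₀, 0 < ε t)
    (hmono : MonotoneOn (fun t => t ^ d * ε t) (Ioo 0 t₀))
    (hlim : Tendsto ε (𝓝[>] 0) (𝓝 0))
    (hsmall : ∀ α : ℝ, 0 < α → Tendsto (fun t => t ^ α / ε t) (𝓝[>] 0) (𝓝 0)) :
    ∃ t₁ : ℝ, 0 < t₁ ∧ t₁ ≤ t₀ ∧
      ∃ C : ℝ, 0 < C ∧
        ∃ εt : ℝ → ℝ,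
          ContinuousOn εt (Ioo 0 t₁) ∧
          StrictMonoOn εt (Ioo 0 t₁) ∧
          (∀ t ∈ Ioo 0 t₁, 0 < εt t) ∧
          (∀ t ∈ Ioo 0 t₁, ε t ≤ εt t) ∧
          Tendsto εt (𝓝[>] 0) (𝓝 0) ∧
          (∀ α : ℝ, 0 < α → Tendsto (fun t => t ^ α / εt t) (𝓝[>] 0) (𝓝 0)) ∧
          AntitoneOn (fun t => εt t ^ (1 / (2 - d)) / t) (Ioo 0 t₁) ∧
          (∀ t ∈ Ioo 0 t₁, εt t ≤ C * εt (t ^ K)) :=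
  stmt9_general d K t₀ hd2 hK ht₀0 ε hεpos hlim hsmall
end

section
/- Let t₀ > 0 and let f : (0, t₀] → (0, ∞) be nondecreasing with f(t) → 0 as t → 0⁺. Then there exists a function g : (0, t₀] → (0, ∞) that is concave on (0, t₀], nondecreasing, satisfies f(t) ≤ g(t) for all t ∈ (0, t₀], and satisfies g(t) → 0 as t → 0⁺. -/
open Set Filter Topology

/-!
Take `g` to be the lower envelope of the lines `t ↦ f δ + (f t₀ / δ) t`, `δ ∈ (0, t₀]`.
Each of them lies above `f`: below `δ` because `f ≤ f δ`, beyond `δ` because the line has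
already reached `f t₀ ≥ f`. As an infimum of nondecreasing affine functions `g` is concave and
nondecreasing, and near `0` it is at most `f δ + o(1)`, which is small for small `δ`.
-/

section iInf

variable {ι : Type*}

theorem MonotoneOn.ciInf {α β : Type*} [Preorder α] [ConditionallyCompleteLattice β]
    {s : Set α} {g : ι → α → β} (hg : ∀ i, MonotoneOn (g i) s)
    (hbdd : ∀ x ∈ s, BddBelow (range fun i => g i x)) :
    MonotoneOn (fun x => ⨅ i, g i x) s :=
  fun _ hx _ hy hxy => ciInf_mono (hbdd _ hx) fun i => hg i hx hy hxy

theorem ConcaveOn.ciInf [Nonempty ι] {𝕜 E β : Type*} [Semiring 𝕜] [PartialOrder 𝕜]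
    [AddCommMonoid E] [SMul 𝕜 E] [ConditionallyCompleteLattice β] [AddCommMonoid β]
    [IsOrderedAddMonoid β] [SMul 𝕜 β] [PosSMulMono 𝕜 β] {s : Set E} {g : ι → E → β}
    (hg : ∀ i, ConcaveOn 𝕜 s (g i)) (hbdd : ∀ x ∈ s, BddBelow (range fun i => g i x)) :
    ConcaveOn 𝕜 s (fun x => ⨅ i, g i x) := by
  refine ⟨(hg (Classical.arbitrary ι)).1, fun x hx y hy a b ha hb hab => le_ciInf fun i => ?_⟩
  calc a • (⨅ i, g i x) + b • (⨅ i, g i y) ≤ a • g i x + b • g i y :=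
        add_le_add (smul_le_smul_of_nonneg_left (ciInf_le (hbdd x hx) i) ha)
          (smul_le_smul_of_nonneg_left (ciInf_le (hbdd y hy) i) hb)
    _ ≤ g i (a • x + b • y) := (hg i).2 hx hy ha hb hab

end iInf

noncomputable def concaveMajorant (f : ℝ → ℝ) (t₀ t : ℝ) : ℝ :=
  ⨅ δ : Ioc 0 t₀, f δ + f t₀ / δ * t

section concaveMajorant

variable {f : ℝ → ℝ} {t₀ : ℝ}

theorem apply_le_add_div_mul (hf : ∀ t ∈ Ioc 0 t₀, 0 ≤ f t) (hmono : MonotoneOn f (Ioc 0 t₀))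
    {δ t : ℝ} (hδ : δ ∈ Ioc 0 t₀) (ht : t ∈ Ioc 0 t₀) : f t ≤ f δ + f t₀ / δ * t := by
  have ht₀ : t₀ ∈ Ioc 0 t₀ := right_mem_Ioc.2 (hδ.1.trans_le hδ.2)
  have hslope : 0 ≤ f t₀ / δ := div_nonneg (hf t₀ ht₀) hδ.1.le
  rcases le_or_gt t δ with htδ | hδt
  · linarith [hmono ht hδ htδ, mul_nonneg hslope ht.1.le]
  · have : f t₀ ≤ f t₀ / δ * t := by
      rw [div_mul_eq_mul_div, le_div_iff₀ hδ.1]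
      exact mul_le_mul_of_nonneg_left hδt.le (hf t₀ ht₀)
    linarith [hmono ht ht₀ ht.2, hf δ hδ]

theorem bddBelow_range_line (hf : ∀ t ∈ Ioc 0 t₀, 0 ≤ f t)
    (hmono : MonotoneOn f (Ioc 0 t₀)) {t : ℝ} (ht : t ∈ Ioc 0 t₀) :
    BddBelow (range fun δ : Ioc 0 t₀ => f δ + f t₀ / δ * t) :=
  ⟨f t, forall_mem_range.2 fun δ => apply_le_add_div_mul hf hmono δ.2 ht⟩

theorem le_concaveMajorant (hf : ∀ t ∈ Ioc 0 t₀, 0 ≤ f t)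
    (hmono : MonotoneOn f (Ioc 0 t₀)) {t : ℝ} (ht : t ∈ Ioc 0 t₀) :
    f t ≤ concaveMajorant f t₀ t :=
  have : Nonempty (Ioc 0 t₀) := ⟨⟨t, ht⟩⟩
  le_ciInf fun δ => apply_le_add_div_mul hf hmono δ.2 ht

theorem concaveMajorant_le (hf : ∀ t ∈ Ioc 0 t₀, 0 ≤ f t)
    (hmono : MonotoneOn f (Ioc 0 t₀)) {δ t : ℝ} (hδ : δ ∈ Ioc 0 t₀) (ht : t ∈ Ioc 0 t₀) :
    concaveMajorant f t₀ t ≤ f δ + f t₀ / δ * t :=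
  ciInf_le (bddBelow_range_line hf hmono ht) ⟨δ, hδ⟩

theorem concaveOn_concaveMajorant (hf : ∀ t ∈ Ioc 0 t₀, 0 ≤ f t)
    (hmono : MonotoneOn f (Ioc 0 t₀)) (ht₀ : 0 < t₀) :
    ConcaveOn ℝ (Ioc 0 t₀) (concaveMajorant f t₀) :=
  have : Nonempty (Ioc 0 t₀) := ⟨⟨t₀, right_mem_Ioc.2 ht₀⟩⟩
  ConcaveOn.ciInf (fun δ => (concaveOn_const _ (convex_Ioc 0 t₀)).add
    ((concaveOn_id (convex_Ioc 0 t₀)).smul (div_nonneg (hf t₀ (right_mem_Ioc.2 ht₀)) δ.2.1.le)))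
    fun _ => bddBelow_range_line hf hmono

theorem monotoneOn_concaveMajorant (hf : ∀ t ∈ Ioc 0 t₀, 0 ≤ f t)
    (hmono : MonotoneOn f (Ioc 0 t₀)) (ht₀ : 0 < t₀) :
    MonotoneOn (concaveMajorant f t₀) (Ioc 0 t₀) :=
  MonotoneOn.ciInf (fun δ => (monotone_const.add (monotone_id.const_mul
    (div_nonneg (hf t₀ (right_mem_Ioc.2 ht₀)) δ.2.1.le))).monotoneOn _)
    fun _ => bddBelow_range_line hf hmono

theorem tendsto_concaveMajorant (hf : ∀ t ∈ Ioc 0 t₀, 0 ≤ f t)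
    (hmono : MonotoneOn f (Ioc 0 t₀)) (ht₀ : 0 < t₀) (hlim : Tendsto f (𝓝[>] 0) (𝓝 0)) :
    Tendsto (concaveMajorant f t₀) (𝓝[>] 0) (𝓝 0) := by
  have hIoc : ∀ᶠ t in 𝓝[>] (0 : ℝ), t ∈ Ioc 0 t₀ := Ioc_mem_nhdsGT ht₀
  refine tendsto_order.2 ⟨fun ε hε => ?_, fun ε hε => ?_⟩
  · filter_upwards [hIoc] with t ht
    exact hε.trans_le ((hf t ht).trans (le_concaveMajorant hf hmono ht))
  · obtain ⟨δ, hδε, hδ⟩ := (((tendsto_order.1 hlim).2 ε hε).and hIoc).exists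
    have hline : Tendsto (fun t => f δ + f t₀ / δ * t) (𝓝[>] 0) (𝓝 (f δ)) := by
      have hcont : Continuous fun t : ℝ => f δ + f t₀ / δ * t := by fun_prop
      simpa using (hcont.tendsto 0).mono_left nhdsWithin_le_nhds
    filter_upwards [hIoc, hline.eventually (gt_mem_nhds hδε)] with t ht hlt
    exact (concaveMajorant_le hf hmono hδ ht).trans_lt hlt

end concaveMajorant

/-- Concave envelope lemma: if `f : (0,t₀] → (0,∞)` is nondecreasing with `f(t) → 0` as
`t → 0⁺`, then there is a `g : (0,t₀] → (0,∞)` concave on `(0,t₀]`, nondecreasing, with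
`f ≤ g` on `(0,t₀]` and `g(t) → 0` as `t → 0⁺`. -/
theorem stmt10 (t₀ : ℝ) (ht₀ : 0 < t₀) (f : ℝ → ℝ)
    (hfpos : ∀ t ∈ Ioc 0 t₀, 0 < f t)
    (hfmono : MonotoneOn f (Ioc 0 t₀))
    (hflim : Tendsto f (𝓝[>] 0) (𝓝 0)) :
    ∃ g : ℝ → ℝ,
      ConcaveOn ℝ (Ioc 0 t₀) g ∧
      MonotoneOn g (Ioc 0 t₀) ∧
      (∀ t ∈ Ioc 0 t₀, 0 < g t) ∧
      (∀ t ∈ Ioc 0 t₀, f t ≤ g t) ∧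
      Tendsto g (𝓝[>] 0) (𝓝 0) := by
  have hf : ∀ t ∈ Ioc 0 t₀, 0 ≤ f t := fun t ht => (hfpos t ht).le
  exact ⟨concaveMajorant f t₀, concaveOn_concaveMajorant hf hfmono ht₀,
    monotoneOn_concaveMajorant hf hfmono ht₀,
    fun t ht => (hfpos t ht).trans_le (le_concaveMajorant hf hfmono ht),
    fun _ => le_concaveMajorant hf hfmono, tendsto_concaveMajorant hf hfmono ht₀ hflim⟩
end

section
/- Let E ⊆ ℂ be a compact set, let s > 0, and let c > 0, C₁ > 0 be constants. Suppose that for every δ > 0 there exists a finite family 𝒢 of closed balls in ℂ with positive radii such that: every ball in 𝒢 has radius at most δ; the balls in 𝒢 are pairwise disjoint; every ball in 𝒢 has nonempty intersection with E; the sum over B ∈ 𝒢 of r(B)^s is at least c, where r(B) is the radius of B; and for every z ∈ ℂ and every ρ > 0, the sum of r(B)^s over those B ∈ 𝒢 contained in the closed ball of center z and radius ρ is at most C₁·ρ^s. Then the s-dimensional Hausdorff measure of E is strictly positive: μH[s](E) > 0. -/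
/-!
Take any countable cover `(tₙ)` of `E`. Fattening each `tₙ` slightly (so that
`(diam tₙ + ηₙ)^s` exceeds `(diam tₙ)^s` by a summable amount) gives an open cover, and
compactness leaves finitely many pieces. At a scale `δ` below all the fattening radii, every ball
of the packing family meets `E`, hence lies in a slightly larger fattening of some piece, which in
turn lies in a closed ball of radius `diam tⱼ + O(ηⱼ)`. Summing the packing condition over these
finitely many balls gives `c ≤ ∑ r(B)^s ≤ C₁ (∑ (diam tₙ)^s + ε)`, so `μH[s] E ≥ c / C₁ > 0`.
-/

open Metric MeasureTheory Set Filter Topology Bornology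
open scoped ENNReal

section Packing

variable {X : Type*} [PseudoMetricSpace X]

open scoped Classical in
def IsCarlesonPacking {ι : Type*} [Fintype ι] (s C : ℝ) (z : ι → X) (r : ι → ℝ) : Prop :=
  ∀ (w : X) (ρ : ℝ), 0 < ρ →
    ∑ i ∈ Finset.univ.filter (fun i => closedBall (z i) (r i) ⊆ closedBall w ρ), r i ^ s ≤
      C * ρ ^ s

def HasSmallCarlesonPackings (E : Set X) (s C c : ℝ) : Prop :=
  ∀ δ : ℝ, 0 < δ → ∃ (n : ℕ) (z : Fin n → X) (r : Fin n → ℝ),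
    (∀ i, 0 ≤ r i) ∧ (∀ i, r i ≤ δ) ∧ (∀ i, (closedBall (z i) (r i) ∩ E).Nonempty) ∧
    c ≤ ∑ i, r i ^ s ∧ IsCarlesonPacking s C z r

theorem IsCarlesonPacking.sum_rpow_le {ι κ : Type*} [Fintype ι] {s C : ℝ} {z : ι → X}
    {r : ι → ℝ} (hpack : IsCarlesonPacking s C z r) (hC : 0 ≤ C) (hr : ∀ i, 0 ≤ r i)
    (J : Finset κ) (U : κ → Set X) (ρ : κ → ℝ) (hU : ∀ j ∈ J, IsBounded (U j))
    (hρ : ∀ j ∈ J, 0 < ρ j) (hUρ : ∀ j ∈ J, diam (U j) ≤ ρ j)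
    (hcov : ∀ i, ∃ j ∈ J, closedBall (z i) (r i) ⊆ U j) :
    ∑ i, r i ^ s ≤ C * ∑ j ∈ J, ρ j ^ s := by
  classical
  choose g hgJ hg using hcov
  have hfiber : ∀ j ∈ J, ∑ i ∈ Finset.univ.filter (g · = j), r i ^ s ≤ C * ρ j ^ s := by
    intro j hj
    rcases (Finset.univ.filter (g · = j)).eq_empty_or_nonempty with hempty | ⟨i₀, hi₀⟩
    · rw [hempty, Finset.sum_empty]
      exact mul_nonneg hC (Real.rpow_nonneg (hρ j hj).le s)
    obtain rfl : g i₀ = j := (Finset.mem_filter.1 hi₀).2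
    have hz : z i₀ ∈ U (g i₀) := hg i₀ (mem_closedBall_self (hr i₀))
    have hUball : U (g i₀) ⊆ closedBall (z i₀) (ρ (g i₀)) := fun x hx =>
      (dist_le_diam_of_mem (hU _ hj) hx hz).trans (hUρ _ hj)
    refine le_trans (Finset.sum_le_sum_of_subset_of_nonneg ?_ fun i _ _ =>
      Real.rpow_nonneg (hr i) s) (hpack (z i₀) _ (hρ _ hj))
    intro i hi
    rw [Finset.mem_filter] at hi ⊢
    exact ⟨Finset.mem_univ i, (hg i).trans (by rw [hi.2]; exact hUball)⟩
  calc ∑ i, r i ^ s = ∑ j ∈ J, ∑ i ∈ Finset.univ.filter (g · = j), r i ^ s :=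
        (Finset.sum_fiberwise_of_maps_to (fun i _ => hgJ i) _).symm
    _ ≤ ∑ j ∈ J, C * ρ j ^ s := Finset.sum_le_sum hfiber
    _ = C * ∑ j ∈ J, ρ j ^ s := (Finset.mul_sum _ _ _).symm

theorem closedBall_subset_cthickening_of_inter_thickening {z : X} {r η : ℝ} {t : Set X}
    (hrη : r ≤ η) (hmeet : (closedBall z r ∩ thickening η t).Nonempty) :
    closedBall z r ⊆ cthickening (3 * η) t := by
  obtain ⟨x, hxz, hxt⟩ := hmeet
  rw [mem_closedBall'] at hxz
  have hr : 0 ≤ r := dist_nonneg.trans hxz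
  calc closedBall z r ⊆ closedBall x (2 * r) := closedBall_subset_closedBall' (by linarith)
    _ ⊆ cthickening (2 * r) (thickening η t) := closedBall_subset_cthickening hxt _
    _ ⊆ cthickening (2 * r + η) t := cthickening_thickening_subset (by positivity) _ _
    _ ⊆ cthickening (3 * η) t := cthickening_mono (by linarith) _

theorem exists_pos_sum_add_rpow_le {ι : Type*} [Countable ι] (a : ι → ℝ) {s : ℝ} (hs : 0 ≤ s)
    {ε : ℝ} (hε : 0 < ε) :
    ∃ η : ι → ℝ, (∀ i, 0 < η i) ∧
      ∀ J : Finset ι, ∑ j ∈ J, (a j + η j) ^ s ≤ ∑ j ∈ J, a j ^ s + ε := by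
  obtain ⟨ε', hε'0, hε'⟩ := (countable_univ (α := ι)).exists_pos_forall_sum_le hε
  have hη : ∀ i, ∃ η, 0 < η ∧ (a i + η) ^ s ≤ a i ^ s + ε' i := by
    intro i
    have hlim : Tendsto (fun η => (a i + η) ^ s) (𝓝[>] 0) (𝓝 (a i ^ s)) := by
      have hcont : Continuous fun η : ℝ => (a i + η) ^ s :=
        (continuous_const.add continuous_id).rpow_const fun _ => Or.inr hs
      simpa using (hcont.tendsto 0).mono_left nhdsWithin_le_nhds
    exact (eventually_mem_nhdsWithin.and
      (hlim.eventually (ge_mem_nhds (lt_add_of_pos_right _ (hε'0 i))))).exists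
  choose η hη0 hηs using hη
  refine ⟨η, hη0, fun J => ?_⟩
  calc ∑ j ∈ J, (a j + η j) ^ s ≤ ∑ j ∈ J, (a j ^ s + ε' j) :=
        Finset.sum_le_sum fun j _ => hηs j
    _ = ∑ j ∈ J, a j ^ s + ∑ j ∈ J, ε' j := Finset.sum_add_distrib
    _ ≤ ∑ j ∈ J, a j ^ s + ε := by gcongr; exact hε' J (subset_univ _)

theorem sum_rpow_le_of_subset_iUnion_thickening {ι κ : Type*} [Fintype ι] {s C : ℝ}
    {z : ι → X} {r : ι → ℝ} (hpack : IsCarlesonPacking s C z r) (hC : 0 ≤ C) (hr : ∀ i, 0 ≤ r i)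
    {E : Set X} (hmeet : ∀ i, (closedBall (z i) (r i) ∩ E).Nonempty) {J : Finset κ}
    {t : κ → Set X} (ht : ∀ j ∈ J, IsBounded (t j)) {η : κ → ℝ}
    (hη : ∀ j ∈ J, 0 < η j) (hrη : ∀ i, ∀ j ∈ J, r i ≤ η j)
    (hE : E ⊆ ⋃ j ∈ J, thickening (η j) (t j)) :
    ∑ i, r i ^ s ≤ C * ∑ j ∈ J, (diam (t j) + 6 * η j) ^ s := by
  refine hpack.sum_rpow_le hC hr J (fun j => cthickening (3 * η j) (t j)) _
    (fun j hj => (ht j hj).cthickening)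
    (fun j hj => by linarith [hη j hj, diam_nonneg (s := t j)])
    (fun j hj => by linarith [diam_cthickening_le (t j) (by linarith [hη j hj] : 0 ≤ 3 * η j)])
    fun i => ?_
  obtain ⟨x, hxB, hxE⟩ := hmeet i
  obtain ⟨j, hj, hxt⟩ := mem_iUnion₂.1 (hE hxE)
  exact ⟨j, hj, closedBall_subset_cthickening_of_inter_thickening (hrη i j hj) ⟨x, hxB, hxt⟩⟩

theorem HasSmallCarlesonPackings.exists_finset_le_sum_diam_rpow {E : Set X} {s C c : ℝ}
    (hfam : HasSmallCarlesonPackings E s C c) (hE : IsCompact E) (hs : 0 ≤ s) (hC : 0 ≤ C)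
    {t : ℕ → Set X} (hEt : E ⊆ ⋃ n, t n) (ht : ∀ n, IsBounded (t n)) {ε : ℝ}
    (hε : 0 < ε) : ∃ J : Finset ℕ, c ≤ C * (∑ j ∈ J, diam (t j) ^ s + ε) := by
  obtain ⟨η, hη, hηsum⟩ := exists_pos_sum_add_rpow_le (fun n => diam (t n)) hs hε
  obtain ⟨J, hJ⟩ := hE.elim_finite_subcover (fun n => thickening (η n / 6) (t n))
    (fun _ => isOpen_thickening)
    (hEt.trans (iUnion_mono fun n => self_subset_thickening (by linarith [hη n]) _))
  obtain ⟨δ, hδ, hδη⟩ : ∃ δ, 0 < δ ∧ ∀ j ∈ J, δ ≤ η j / 6 :=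
    (eventually_mem_nhdsWithin.and <| (eventually_all_finset J).2 fun j _ =>
      nhdsWithin_le_nhds (eventually_le_nhds (by linarith [hη j]))).exists (f := 𝓝[>] (0 : ℝ))
  obtain ⟨n, z, r, hr, hrδ, hmeet, hmass, hpack⟩ := hfam δ hδ
  refine ⟨J, ?_⟩
  calc c ≤ ∑ i, r i ^ s := hmass
    _ ≤ C * ∑ j ∈ J, (diam (t j) + 6 * (η j / 6)) ^ s :=
        sum_rpow_le_of_subset_iUnion_thickening hpack hC hr hmeet (fun j _ => ht j)
          (fun j _ => by linarith [hη j]) (fun i j hj => (hrδ i).trans (hδη j hj)) hJ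
    _ ≤ C * (∑ j ∈ J, diam (t j) ^ s + ε) := by
        simp only [mul_div_cancel₀ _ (by norm_num : (6 : ℝ) ≠ 0)]
        exact mul_le_mul_of_nonneg_left (hηsum J) hC

theorem HasSmallCarlesonPackings.ofReal_div_le_tsum_ediam_rpow {E : Set X} {s C c : ℝ}
    (hfam : HasSmallCarlesonPackings E s C c) (hE : IsCompact E) (hs : 0 < s) (hC : 0 < C)
    {t : ℕ → Set X} (hEt : E ⊆ ⋃ n, t n) :
    ENNReal.ofReal (c / C) ≤ ∑' n, ediam (t n) ^ s := by
  by_cases htop : ∑' n, ediam (t n) ^ s = ∞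
  · simp [htop]
  have ht : ∀ n, IsBounded (t n) := fun n => isBounded_iff_ediam_ne_top.2 fun h =>
    htop (ENNReal.tsum_eq_top_of_eq_top ⟨n, by simp [h, hs]⟩)
  have hterm : ∀ n, ENNReal.ofReal (diam (t n) ^ s) = ediam (t n) ^ s := fun n => by
    rw [← ENNReal.ofReal_rpow_of_nonneg diam_nonneg hs.le, diam,
      ENNReal.ofReal_toReal (ht n).ediam_ne_top]
  refine ENNReal.le_of_forall_pos_le_add fun ε hε _ => ?_
  obtain ⟨J, hJ⟩ :=
    hfam.exists_finset_le_sum_diam_rpow hE hs.le hC.le hEt ht (NNReal.coe_pos.2 hε)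
  calc ENNReal.ofReal (c / C) ≤ ENNReal.ofReal (∑ j ∈ J, diam (t j) ^ s + ε) :=
        ENNReal.ofReal_le_ofReal ((div_le_iff₀' hC).2 hJ)
    _ = ∑ j ∈ J, ediam (t j) ^ s + ε := by
        rw [ENNReal.ofReal_add (Finset.sum_nonneg fun j _ => Real.rpow_nonneg diam_nonneg s)
          ε.coe_nonneg, ENNReal.ofReal_sum_of_nonneg fun j _ => Real.rpow_nonneg diam_nonneg s,
          ENNReal.ofReal_coe_nnreal]
        simp only [hterm]
    _ ≤ ∑' n, ediam (t n) ^ s + ε := by gcongr; exact ENNReal.sum_le_tsum J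

end Packing

theorem HasSmallCarlesonPackings.ofReal_div_le_hausdorffMeasure {X : Type*} [MetricSpace X]
    [MeasurableSpace X] [BorelSpace X] {E : Set X} {s C c : ℝ}
    (hfam : HasSmallCarlesonPackings E s C c) (hE : IsCompact E) (hs : 0 < s) (hC : 0 < C) :
    ENNReal.ofReal (c / C) ≤ μH[s] E := by
  rw [Measure.hausdorffMeasure_apply]
  refine le_iSup₂_of_le 1 one_pos <| le_iInf fun t => le_iInf₂ fun hEt _ => ?_
  refine (hfam.ofReal_div_le_tsum_ediam_rpow hE hs hC hEt).trans <|
    ENNReal.tsum_le_tsum fun n => ?_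
  rcases (t n).eq_empty_or_nonempty with hempty | hne
  · simp [hempty, hs]
  · exact le_iSup_of_le hne le_rfl

open scoped Classical in
/-- A packing criterion for positivity of Hausdorff measure: if a compact set `E ⊆ ℂ` admits,
at every scale `δ > 0`, a finite family of pairwise disjoint closed balls of radii `≤ δ`
meeting `E`, whose radii satisfy `∑ r(B)^s ≥ c` together with the Carleson packing condition
`∑_{B ⊆ closedBall z ρ} r(B)^s ≤ C₁·ρ^s`, then `μH[s](E) > 0`. -/
theorem stmt12 (E : Set ℂ) (hE : IsCompact E) (s : ℝ) (hs : 0 < s)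
    (c C₁ : ℝ) (hc : 0 < c) (hC₁ : 0 < C₁)
    (hfam : ∀ δ : ℝ, 0 < δ →
      ∃ (n : ℕ) (z : Fin n → ℂ) (r : Fin n → ℝ),
        (∀ i, 0 < r i) ∧
        (∀ i, r i ≤ δ) ∧
        (Pairwise fun i j => Disjoint (closedBall (z i) (r i)) (closedBall (z j) (r j))) ∧
        (∀ i, (closedBall (z i) (r i) ∩ E).Nonempty) ∧
        c ≤ ∑ i, r i ^ s ∧
        (∀ (w : ℂ) (ρ : ℝ), 0 < ρ →
          ∑ i ∈ Finset.univ.filter (fun i => closedBall (z i) (r i) ⊆ closedBall w ρ),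
            r i ^ s ≤ C₁ * ρ ^ s)) :
    0 < μH[s] E := by
  have hpack : HasSmallCarlesonPackings E s C₁ c := fun δ hδ => by
    obtain ⟨n, z, r, hr, hrδ, -, hmeet, hmass, hpack⟩ := hfam δ hδ
    exact ⟨n, z, r, fun i => (hr i).le, hrδ, hmeet, hmass, hpack⟩
  exact (ENNReal.ofReal_pos.2 (div_pos hc hC₁)).trans_le
    (hpack.ofReal_div_le_hausdorffMeasure hE hs hC₁)
end

section
/- Let h : [0, ∞) → [0, ∞) be a gauge function, i.e. h is continuous, nondecreasing, h(0) = 0 and h(t) > 0 for t > 0. Let E ⊆ ℂ be a compact set and let c > 0, C₁ > 0 be constants. Suppose that for every δ > 0 there exists a finite family 𝒢 of closed balls in ℂ with positive radii such that: every ball in 𝒢 has radius at most δ; the balls in 𝒢 are pairwise disjoint; every ball in 𝒢 has nonempty intersection with E; the sum over B ∈ 𝒢 of h(r(B)) is at least c, where r(B) is the radius of B; and for every z ∈ ℂ and every ρ > 0, the sum of h(r(B)) over those B ∈ 𝒢 contained in the closed ball of center z and radius ρ is at most C₁·h(ρ). Then the generalized Hausdorff measure of E with gauge h is strictly positive: H^h(E)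 > 0. -/
open Metric MeasureTheory Set
open scoped ENNReal

/-!
If `H^h(E) = 0`, then `E` is covered by countably many sets `Uₙ` with `∑ h(diam Uₙ)` as small as
we like; continuity of `h` lets us fatten each `Uₙ` to an open ball `Bₙ` keeping
`∑ h(r(Bₙ)) < c / C₁`. For a Lebesgue number `δ` of this cover of the compact set `E`, every ball
of radius `≤ δ / 3` meeting `E` lies in some `Bₙ`, so the packing family at scale `δ / 3` gives
`c ≤ ∑ h(r(B)) ≤ C₁ ∑ₙ h(r(Bₙ)) < c`.
-/

namespace MeasureTheory.Measure

theorem exists_cover_tsum_lt_of_mkMetric_eq_zero {X : Type*} [EMetricSpace X] [MeasurableSpace X]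
    [BorelSpace X] {m : ℝ≥0∞ → ℝ≥0∞} {s : Set X} (hs : mkMetric m s = 0) {r ε : ℝ≥0∞}
    (hr : 0 < r) (hε : 0 < ε) :
    ∃ t : ℕ → Set X, s ⊆ ⋃ n, t n ∧ (∀ n, ediam (t n) ≤ r) ∧
      ∑' n, ⨆ _ : (t n).Nonempty, m (ediam (t n)) < ε := by
  rw [mkMetric_apply, ENNReal.iSup_eq_zero] at hs
  have hr0 := ENNReal.iSup_eq_zero.1 (hs r) hr
  simpa only [iInf_lt_iff, exists_prop] using hr0.trans_lt hε

end MeasureTheory.Measure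

theorem ContinuousWithinAt.exists_gt_lt_add {h : ℝ → ℝ} {d κ : ℝ}
    (hcont : ContinuousWithinAt h (Ioi d) d) (hκ : 0 < κ) : ∃ ρ, d < ρ ∧ h ρ < h d + κ :=
  ((hcont.eventually (Iio_mem_nhds (lt_add_of_pos_right _ hκ))).and
    self_mem_nhdsWithin).exists.imp fun _ hρ => hρ.symm

section Gauge

variable {X : Type*} [MetricSpace X]

theorem Bornology.IsBounded.exists_subset_ball_of_diam_lt [Nonempty X] {t : Set X}
    (ht : Bornology.IsBounded t) {ρ : ℝ} (hρ : diam t < ρ) : ∃ x, t ⊆ ball x ρ := by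
  rcases t.eq_empty_or_nonempty with rfl | ⟨x, hx⟩
  · exact ⟨Classical.arbitrary X, empty_subset _⟩
  · exact ⟨x, fun y hy => mem_ball.2 ((dist_le_diam_of_mem ht hy hx).trans_lt hρ)⟩

theorem exists_ball_cover_tsum_lt_of_mkMetric_eq_zero [MeasurableSpace X] [BorelSpace X]
    [Nonempty X] {h : ℝ → ℝ} (hcont : ContinuousOn h (Ici 0)) (h0 : h 0 = 0) {s : Set X}
    (hs : Measure.mkMetric (fun d : ℝ≥0∞ => ENNReal.ofReal (h d.toReal)) s = 0)
    {ε : ℝ≥0∞} (hε : 0 < ε) :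
    ∃ (x : ℕ → X) (ρ : ℕ → ℝ), (∀ n, 0 < ρ n) ∧ s ⊆ ⋃ n, ball (x n) (ρ n) ∧
      ∑' n, ENNReal.ofReal (h (ρ n)) < ε := by
  have hε2 : 0 < ε / 2 := ENNReal.half_pos hε.ne'
  obtain ⟨κ, hκ, hκε⟩ := ENNReal.exists_pos_sum_of_countable hε2.ne' ℕ
  obtain ⟨t, hst, ht1, htε⟩ := Measure.exists_cover_tsum_lt_of_mkMetric_eq_zero hs one_pos hε2
  have hbdd (n : ℕ) : Bornology.IsBounded (t n) :=
    isBounded_iff_ediam_ne_top.2 ((ht1 n).trans_lt ENNReal.one_lt_top).ne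
  have hsummand (n : ℕ) : ⨆ _ : (t n).Nonempty, ENNReal.ofReal (h (ediam (t n)).toReal) =
      ENNReal.ofReal (h (diam (t n))) := by
    rcases (t n).eq_empty_or_nonempty with he | hne
    · simp [he, h0]
    · simp [hne, diam]
  have hball (n : ℕ) : ∃ x ρ, 0 < ρ ∧ t n ⊆ ball x ρ ∧ h ρ < h (diam (t n)) + κ n := by
    have hcont' : ContinuousWithinAt h (Ioi (diam (t n))) (diam (t n)) :=
      (hcont _ diam_nonneg).mono fun _ hy => (diam_nonneg.trans_lt hy).le
    obtain ⟨ρ, hdρ, hρ⟩ := hcont'.exists_gt_lt_add (hκ n)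
    obtain ⟨x, hx⟩ := (hbdd n).exists_subset_ball_of_diam_lt hdρ
    exact ⟨x, ρ, diam_nonneg.trans_lt hdρ, hx, hρ⟩
  choose x ρ hρ htx hhρ using hball
  refine ⟨x, ρ, hρ, hst.trans (iUnion_mono htx), ?_⟩
  calc ∑' n, ENNReal.ofReal (h (ρ n))
      ≤ ∑' n, (ENNReal.ofReal (h (diam (t n))) + κ n) := ENNReal.tsum_le_tsum fun n =>
        (ENNReal.ofReal_le_ofReal (hhρ n).le).trans
          (ENNReal.ofReal_add_le.trans_eq (by rw [ENNReal.ofReal_coe_nnreal]))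
    _ = ∑' n, ENNReal.ofReal (h (diam (t n))) + ∑' n, (κ n : ℝ≥0∞) := ENNReal.tsum_add
    _ < ε / 2 + ε / 2 := ENNReal.add_lt_add (by simpa only [hsummand] using htε) hκε
    _ = ε := ENNReal.add_halves ε

open scoped Classical in
theorem sum_le_mul_sum_image_of_packing {ι : Type*} [Fintype ι] {z : ι → X} {r : ι → ℝ}
    {h : ℝ → ℝ} {C : ℝ} (hr : ∀ i, 0 ≤ h (r i))
    (hpack : ∀ (w : X) (ρ : ℝ), 0 < ρ →
      ∑ i ∈ Finset.univ.filter (fun i => closedBall (z i) (r i) ⊆ closedBall w ρ), h (r i) ≤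
        C * h ρ)
    {x : ℕ → X} {ρ : ℕ → ℝ} (hρ : ∀ n, 0 < ρ n) {φ : ι → ℕ}
    (hφ : ∀ i, closedBall (z i) (r i) ⊆ closedBall (x (φ i)) (ρ (φ i))) :
    ∑ i, h (r i) ≤ C * ∑ n ∈ Finset.univ.image φ, h (ρ n) := by
  calc ∑ i, h (r i) = ∑ n ∈ Finset.univ.image φ, ∑ i ∈ Finset.univ.filter (φ · = n), h (r i) :=
        (Finset.sum_fiberwise_of_maps_to (fun i hi => Finset.mem_image_of_mem φ hi) _).symm
    _ ≤ ∑ n ∈ Finset.univ.image φ, C * h (ρ n) := by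
        refine Finset.sum_le_sum fun n _ => le_trans ?_ (hpack (x n) (ρ n) (hρ n))
        refine Finset.sum_le_sum_of_subset_of_nonneg ?_ fun i _ _ => hr i
        exact Finset.monotone_filter_right _ fun i _ hi => hi ▸ hφ i
    _ = C * ∑ n ∈ Finset.univ.image φ, h (ρ n) := (Finset.mul_sum ..).symm

end Gauge

open scoped Classical in
theorem stmt13_general (h : ℝ → ℝ)
    (hcont : ContinuousOn h (Ici 0))
    (h0 : h 0 = 0) (hpos : ∀ t : ℝ, 0 < t → 0 < h t)
    (E : Set ℂ) (hE : IsCompact E)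
    (c C₁ : ℝ) (hc : 0 < c) (hC₁ : 0 < C₁)
    (hfam : ∀ δ : ℝ, 0 < δ →
      ∃ (n : ℕ) (z : Fin n → ℂ) (r : Fin n → ℝ),
        (∀ i, 0 < r i) ∧
        (∀ i, r i ≤ δ) ∧
        (Pairwise fun i j => Disjoint (closedBall (z i) (r i)) (closedBall (z j) (r j))) ∧
        (∀ i, (closedBall (z i) (r i) ∩ E).Nonempty) ∧
        c ≤ ∑ i, h (r i) ∧
        (∀ (w : ℂ) (ρ : ℝ), 0 < ρ →
          ∑ i ∈ Finset.univ.filter (fun i => closedBall (z i) (r i) ⊆ closedBall w ρ),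
            h (r i) ≤ C₁ * h ρ)) :
    0 < (Measure.mkMetric (fun d : ℝ≥0∞ => ENNReal.ofReal (h d.toReal)) : Measure ℂ) E := by
  refine pos_iff_ne_zero.2 fun hE0 => ?_
  obtain ⟨x, ρ, hρ, hEx, hρc⟩ := exists_ball_cover_tsum_lt_of_mkMetric_eq_zero hcont h0 hE0
    (ENNReal.ofReal_pos.2 (div_pos hc hC₁))
  obtain ⟨δ, hδ, hδx⟩ := lebesgue_number_lemma_of_metric hE (fun _ => isOpen_ball) hEx
  obtain ⟨k, z, r, hr, hrδ, -, hzE, hcr, hpack⟩ := hfam (δ / 3) (by positivity)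
  have hφ (i : Fin k) : ∃ n, closedBall (z i) (r i) ⊆ closedBall (x n) (ρ n) := by
    obtain ⟨p, hpz, hpE⟩ := hzE i
    obtain ⟨n, hn⟩ := hδx p hpE
    have : r i + dist (z i) p < δ := by rw [dist_comm]; linarith [mem_closedBall.1 hpz, hrδ i]
    exact ⟨n, (closedBall_subset_ball' this).trans (hn.trans ball_subset_closedBall)⟩
  choose φ hφ using hφ
  have hρS : ∑ n ∈ Finset.univ.image φ, h (ρ n) < c / C₁ := by
    rw [← ENNReal.ofReal_lt_ofReal_iff (div_pos hc hC₁),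
      ENNReal.ofReal_sum_of_nonneg fun n _ => (hpos _ (hρ n)).le]
    exact (ENNReal.sum_le_tsum _).trans_lt hρc
  refine lt_irrefl c ?_
  calc c ≤ ∑ i, h (r i) := hcr
    _ ≤ C₁ * ∑ n ∈ Finset.univ.image φ, h (ρ n) :=
      sum_le_mul_sum_image_of_packing (fun i => (hpos _ (hr i)).le) hpack hρ hφ
    _ < C₁ * (c / C₁) := mul_lt_mul_of_pos_left hρS hC₁
    _ = c := mul_div_cancel₀ c hC₁.ne'

open scoped Classical in
/-- A packing criterion for positivity of generalized Hausdorff measure with gauge `h`: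
if a compact set `E ⊆ ℂ` admits, at every scale `δ > 0`, a finite family of pairwise
disjoint closed balls of radii `≤ δ` meeting `E`, whose radii satisfy `∑ h(r(B)) ≥ c`
together with the Carleson packing condition `∑_{B ⊆ closedBall z ρ} h(r(B)) ≤ C₁·h(ρ)`,
then the `h`-Hausdorff measure of `E` is strictly positive. -/
theorem stmt13 (h : ℝ → ℝ)
    (hcont : ContinuousOn h (Ici 0)) (hmono : MonotoneOn h (Ici 0))
    (h0 : h 0 = 0) (hpos : ∀ t : ℝ, 0 < t → 0 < h t)
    (E : Set ℂ) (hE : IsCompact E)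
    (c C₁ : ℝ) (hc : 0 < c) (hC₁ : 0 < C₁)
    (hfam : ∀ δ : ℝ, 0 < δ →
      ∃ (n : ℕ) (z : Fin n → ℂ) (r : Fin n → ℝ),
        (∀ i, 0 < r i) ∧
        (∀ i, r i ≤ δ) ∧
        (Pairwise fun i j => Disjoint (closedBall (z i) (r i)) (closedBall (z j) (r j))) ∧
        (∀ i, (closedBall (z i) (r i) ∩ E).Nonempty) ∧
        c ≤ ∑ i, h (r i) ∧
        (∀ (w : ℂ) (ρ : ℝ), 0 < ρ →
          ∑ i ∈ Finset.univ.filter (fun i => closedBall (z i) (r i) ⊆ closedBall w ρ),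
            h (r i) ≤ C₁ * h ρ)) :
    0 < (Measure.mkMetric (fun d : ℝ≥0∞ => ENNReal.ofReal (h d.toReal)) : Measure ℂ) E :=
  stmt13_general h hcont h0 hpos E hE c C₁ hc hC₁ hfam
end

section
/- For every real number d with 0 < d < 2 there exists a compact set E ⊆ ℂ such that the d-dimensional Hausdorff measure of E is strictly positive and finite: 0 < μH[d](E) < ∞. -/
/-!
Take the four-corner Cantor set `E = {∑ rⁿ cₙ : cₙ ∈ {0, 1, i, 1 + i}}` with `r ^ d = 1/4`;
`d < 2` forces `r < 1/2`. It is covered by `4ⁿ` pieces of diameter `O(rⁿ)`, which bounds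
`μH[d] E` above. Since `r < 1/2` and distinct corners differ by `1` in one coordinate, two
codes first differing at place `n` are mapped to points at distance `≥ c rⁿ`. Hence reading
a code as a base-`4` expansion is a `d`-Hölder map from `E` onto `[0, 1]`, and so
`1 = μH[1] [0, 1] ≤ C μH[d] E`.
-/
open MeasureTheory Filter Set Function Metric
open scoped ENNReal NNReal Topology

theorem norm_tsum_sub_le_of_eq_zero {E : Type*} [NormedAddCommGroup E] [CompleteSpace E]
    {c : ℕ → E} {K r : ℝ} {n : ℕ} (hr0 : 0 ≤ r) (hr1 : r < 1)
    (hc : ∀ m, ‖c m‖ ≤ K * r ^ m) (hzero : ∀ m < n, c m = 0) :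
    ‖(∑' m, c m) - c n‖ ≤ K * r ^ (n + 1) / (1 - r) := by
  have hs : Summable c := .of_norm_bounded ((summable_geometric_of_lt_one hr0 hr1).mul_left K) hc
  have hhead : ∑ m ∈ Finset.range (n + 1), c m = c n := by
    rw [Finset.sum_range_succ, Finset.sum_eq_zero fun m hm => hzero m (Finset.mem_range.mp hm),
      zero_add]
  rw [← hs.sum_add_tsum_nat_add (n + 1), hhead, add_sub_cancel_left, div_eq_mul_inv]
  refine tsum_of_norm_bounded
    ((hasSum_geometric_of_lt_one hr0 hr1).mul_left (K * r ^ (n + 1))) fun m => ?_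
  calc ‖c (m + (n + 1))‖ ≤ K * r ^ (m + (n + 1)) := hc _
    _ = K * r ^ (n + 1) * r ^ m := by ring

theorem hausdorffMeasure_range_le_of_dist_le {α X Y : Type*} [MetricSpace X] [MetricSpace Y]
    [MeasurableSpace X] [BorelSpace X] [MeasurableSpace Y] [BorelSpace Y]
    {f : α → X} {g : α → Y} {C r : ℝ≥0} (hr : 0 < r)
    (h : ∀ a b, dist (g a) (g b) ≤ C * dist (f a) (f b) ^ (r : ℝ)) {d : ℝ} (hd : 0 ≤ d) :
    μH[d] (range g) ≤ (C : ℝ≥0∞) ^ d * μH[r * d] (range f) := by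
  rcases isEmpty_or_nonempty α with hα | hα
  · simp [range_eq_empty]
  -- `g` is constant on the fibres of `f`, so it descends to a Hölder map on `range f`.
  have hfactor : ∀ a, g (invFun f (f a)) = g a := fun a => by
    have := h (invFun f (f a)) a
    rw [invFun_eq (f := f) ⟨a, rfl⟩, dist_self, Real.zero_rpow (mod_cast hr.ne'),
      mul_zero] at this
    exact dist_le_zero.mp this
  have hholder : HolderOnWith C r (g ∘ invFun f) (range f) := by
    rintro _ ⟨a, rfl⟩ _ ⟨b, rfl⟩
    simp only [comp_apply, hfactor]
    rw [edist_dist, edist_dist, ENNReal.ofReal_rpow_of_nonneg dist_nonneg r.coe_nonneg,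
      ← ENNReal.ofReal_coe_nnreal, ← ENNReal.ofReal_mul C.coe_nonneg]
    exact ENNReal.ofReal_le_ofReal (h a b)
  have hrange : range g = (g ∘ invFun f) '' range f := by
    rw [← range_comp, comp_assoc]
    exact congrArg range (funext fun a => (hfactor a).symm)
  rw [hrange]
  exact hholder.hausdorffMeasure_image_le hr hd

theorem hausdorffMeasure_le_of_forall_cover_pow {X : Type*} [EMetricSpace X] [MeasurableSpace X]
    [BorelSpace X] {N : ℕ} {s : Set X} (t : ∀ n, (Fin n → Fin N) → Set X)
    (hst : ∀ n, s ⊆ ⋃ w, t n w) {D ρ : ℝ≥0∞} (hD : D ≠ ⊤) (hρ : ρ < 1)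
    (ht : ∀ n w, ediam (t n w) ≤ D * ρ ^ n) {d : ℝ} (hd : 0 < d) (hNρ : N * ρ ^ d = 1) :
    μH[d] s ≤ D ^ d := by
  have hε : Tendsto (fun n : ℕ => D * ρ ^ n) atTop (𝓝 0) := by
    simpa using ENNReal.Tendsto.const_mul
      (ENNReal.tendsto_pow_atTop_nhds_zero_of_lt_one hρ) (.inr hD)
  refine (Measure.hausdorffMeasure_le_liminf_sum d s _ hε t (.of_forall ht)
    (.of_forall hst)).trans (liminf_le_of_frequently_le' (.of_forall fun n => ?_))
  calc ∑ w, ediam (t n w) ^ d ≤ ∑ _w : Fin n → Fin N, (D * ρ ^ n) ^ d :=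
        Finset.sum_le_sum fun w _ => ENNReal.rpow_le_rpow (ht n w) hd.le
    _ = D ^ d * (N * ρ ^ d) ^ n := by
        rw [Finset.sum_const, Finset.card_univ, Fintype.card_fun, Fintype.card_fin,
          Fintype.card_fin, nsmul_eq_mul, ENNReal.mul_rpow_of_nonneg _ _ hd.le,
          ← ENNReal.rpow_natCast, ← ENNReal.rpow_mul, mul_comm _ d, ENNReal.rpow_mul,
          ENNReal.rpow_natCast, mul_pow]
        push_cast
        ring
    _ = D ^ d := by rw [hNρ, one_pow, mul_one]

namespace FourCorner

noncomputable section

def corner (k : Fin 4) : ℂ := ⟨(k % 2 : ℕ), (k / 2 : ℕ)⟩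

theorem corner_zero : corner 0 = 0 := by
  apply Complex.ext <;> simp [corner]

theorem abs_re_corner_sub_le (a b : Fin 4) : |(corner a - corner b).re| ≤ 1 := by
  fin_cases a <;> fin_cases b <;> norm_num [corner]

theorem abs_im_corner_sub_le (a b : Fin 4) : |(corner a - corner b).im| ≤ 1 := by
  fin_cases a <;> fin_cases b <;> norm_num [corner]

theorem abs_re_or_im_corner_sub_eq_one {a b : Fin 4} (h : a ≠ b) :
    |(corner a - corner b).re| = 1 ∨ |(corner a - corner b).im| = 1 := by
  fin_cases a <;> fin_cases b <;> first | exact absurd rfl h | norm_num [corner]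

theorem norm_corner_sub_le (a b : Fin 4) : ‖corner a - corner b‖ ≤ 2 := by
  linarith [Complex.norm_le_abs_re_add_abs_im (corner a - corner b),
    abs_re_corner_sub_le a b, abs_im_corner_sub_le a b]

def fourCorner (r : ℝ) (x : ℕ → Fin 4) : ℂ := ∑' n, r ^ n • corner (x n)

variable {r : ℝ}

theorem norm_pow_smul_corner_sub_le (hr0 : 0 ≤ r) (a b : Fin 4) (m : ℕ) :
    ‖r ^ m • (corner a - corner b)‖ ≤ 2 * r ^ m := by
  rw [norm_smul, Real.norm_of_nonneg (by positivity), mul_comm]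
  exact mul_le_mul_of_nonneg_right (norm_corner_sub_le a b) (by positivity)

theorem norm_pow_smul_corner_le (hr0 : 0 ≤ r) (k : Fin 4) (m : ℕ) :
    ‖r ^ m • corner k‖ ≤ 2 * r ^ m := by
  simpa [corner_zero] using norm_pow_smul_corner_sub_le hr0 k 0 m

theorem continuous_fourCorner (hr0 : 0 ≤ r) (hr1 : r < 1) : Continuous (fourCorner r) :=
  continuous_tsum (fun m => by fun_prop)
    ((summable_geometric_of_lt_one hr0 hr1).mul_left 2)
    fun m x => norm_pow_smul_corner_le hr0 (x m) m

theorem hasSum_fourCorner_sub (hr0 : 0 ≤ r) (hr1 : r < 1) (x y : ℕ → Fin 4) :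
    HasSum (fun m => r ^ m • (corner (x m) - corner (y m)))
      (fourCorner r x - fourCorner r y) := by
  have hsummable (z : ℕ → Fin 4) : Summable fun m => r ^ m • corner (z m) :=
    .of_norm_bounded ((summable_geometric_of_lt_one hr0 hr1).mul_left 2)
      fun m => norm_pow_smul_corner_le hr0 (z m) m
  simp_rw [smul_sub]
  exact (hsummable x).hasSum.sub (hsummable y).hasSum

theorem dist_fourCorner_le (hr0 : 0 ≤ r) (hr1 : r < 1) {x y : ℕ → Fin 4} {n : ℕ}
    (h : ∀ m < n, x m = y m) : dist (fourCorner r x) (fourCorner r y) ≤ 2 * r ^ n / (1 - r) := by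
  have htail := norm_tsum_sub_le_of_eq_zero (n := n) hr0 hr1
    (fun m => norm_pow_smul_corner_sub_le hr0 (x m) (y m) m) (fun m hm => by simp [h m hm])
  rw [(hasSum_fourCorner_sub hr0 hr1 x y).tsum_eq] at htail
  have hn := norm_pow_smul_corner_sub_le hr0 (x n) (y n) n
  have h1r : 0 < 1 - r := by linarith
  calc dist (fourCorner r x) (fourCorner r y)
      ≤ ‖r ^ n • (corner (x n) - corner (y n))‖ + 2 * r ^ (n + 1) / (1 - r) := by
        rw [dist_eq_norm]
        linarith [norm_le_norm_add_norm_sub' (fourCorner r x - fourCorner r y)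
          (r ^ n • (corner (x n) - corner (y n)))]
    _ ≤ 2 * r ^ n + 2 * r ^ (n + 1) / (1 - r) := by linarith
    _ = 2 * r ^ n / (1 - r) := by field_simp; ring

theorem le_dist_fourCorner_of_proj (hr0 : 0 ≤ r) (hr1 : r < 1) (ℓ : ℂ →L[ℝ] ℝ)
    (hℓ : ∀ z, |ℓ z| ≤ ‖z‖) (hℓcorner : ∀ a b, |ℓ (corner a - corner b)| ≤ 1)
    {x y : ℕ → Fin 4} {n : ℕ} (h : ∀ m < n, x m = y m)
    (hn : |ℓ (corner (x n) - corner (y n))| = 1) :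
    (1 - 2 * r) / (1 - r) * r ^ n ≤ dist (fourCorner r x) (fourCorner r y) := by
  have hnorm (m : ℕ) : ‖ℓ (r ^ m • (corner (x m) - corner (y m)))‖
      = r ^ m * |ℓ (corner (x m) - corner (y m))| := by
    rw [ℓ.map_smul, smul_eq_mul, Real.norm_eq_abs, abs_mul, abs_of_nonneg (pow_nonneg hr0 m)]
  have htail := norm_tsum_sub_le_of_eq_zero (n := n) (K := 1) hr0 hr1
    (fun m => by rw [hnorm, one_mul, mul_comm]; exact
      mul_le_of_le_one_left (pow_nonneg hr0 m) (hℓcorner (x m) (y m)))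
    (fun m hm => by simp [h m hm])
  rw [((hasSum_fourCorner_sub hr0 hr1 x y).mapL ℓ).tsum_eq] at htail
  set lead := ℓ (r ^ n • (corner (x n) - corner (y n)))
  have h1r : 0 < 1 - r := by linarith
  calc (1 - 2 * r) / (1 - r) * r ^ n = ‖lead‖ - 1 * r ^ (n + 1) / (1 - r) := by
        rw [hnorm, hn]; field_simp; ring
    _ ≤ ‖ℓ (fourCorner r x - fourCorner r y)‖ := by
        linarith [norm_sub_norm_le lead (ℓ (fourCorner r x - fourCorner r y)),
          norm_sub_rev lead (ℓ (fourCorner r x - fourCorner r y))]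
    _ ≤ dist (fourCorner r x) (fourCorner r y) := by
        rw [Real.norm_eq_abs, dist_eq_norm]; exact hℓ _

theorem le_dist_fourCorner (hr0 : 0 ≤ r) (hr1 : r < 1) {x y : ℕ → Fin 4} {n : ℕ}
    (h : ∀ m < n, x m = y m) (hne : x n ≠ y n) :
    (1 - 2 * r) / (1 - r) * r ^ n ≤ dist (fourCorner r x) (fourCorner r y) := by
  rcases abs_re_or_im_corner_sub_eq_one hne with hre | him
  · exact le_dist_fourCorner_of_proj hr0 hr1 Complex.reCLM Complex.abs_re_le_norm
      abs_re_corner_sub_le h hre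
  · exact le_dist_fourCorner_of_proj hr0 hr1 Complex.imCLM Complex.abs_im_le_norm
      abs_im_corner_sub_le h him

theorem dist_ofDigits_le (hr0 : 0 < r) (hr : r < 1 / 2) {d : ℝ} (hd : 0 < d)
    (hrd : r ^ d = 1 / 4) (x y : ℕ → Fin 4) :
    dist (Real.ofDigits x) (Real.ofDigits y)
      ≤ (((1 - 2 * r) / (1 - r)) ^ d)⁻¹ * dist (fourCorner r x) (fourCorner r y) ^ d := by
  rcases eq_or_ne x y with rfl | hne
  · simp [Real.zero_rpow hd.ne']
  set n := PiNat.firstDiff x y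
  set γ := (1 - 2 * r) / (1 - r)
  have hγ : 0 < γ := div_pos (by linarith) (by linarith)
  have hsep : γ * r ^ n ≤ dist (fourCorner r x) (fourCorner r y) :=
    le_dist_fourCorner hr0.le (by linarith) (fun m hm => PiNat.apply_eq_of_lt_firstDiff hm)
      (PiNat.apply_firstDiff_ne hne)
  have hpow : (r ^ n) ^ d = ((4 : ℝ) ^ n)⁻¹ := by
    rw [← Real.rpow_natCast, ← Real.rpow_mul hr0.le, mul_comm, Real.rpow_mul hr0.le, hrd,
      Real.rpow_natCast, one_div, inv_pow]
  calc dist (Real.ofDigits x) (Real.ofDigits y) ≤ ((4 : ℝ) ^ n)⁻¹ := by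
        rw [Real.dist_eq]
        simpa using Real.abs_ofDigits_sub_ofDigits_le (x := x) (y := y)
          (fun m hm => PiNat.apply_eq_of_lt_firstDiff hm)
    _ = (γ * r ^ n) ^ d / γ ^ d := by
        rw [Real.mul_rpow hγ.le (by positivity), mul_div_cancel_left₀ _ (by positivity), hpow]
    _ ≤ (γ ^ d)⁻¹ * dist (fourCorner r x) (fourCorner r y) ^ d := by
        rw [div_eq_inv_mul]
        gcongr

theorem hausdorffMeasure_range_fourCorner_le (hr0 : 0 < r) (hr1 : r < 1) {d : ℝ} (hd : 0 < d)
    (hrd : r ^ d = 1 / 4) :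
    μH[d] (range (fourCorner r)) ≤ ENNReal.ofReal (2 / (1 - r)) ^ d := by
  refine hausdorffMeasure_le_of_forall_cover_pow (N := 4)
    (fun n w => fourCorner r '' {x | ∀ i : Fin n, x i = w i}) (fun n => ?_)
    ENNReal.ofReal_ne_top (ENNReal.ofReal_lt_one.mpr hr1) (fun n w => ?_) hd ?_
  · rintro _ ⟨x, rfl⟩
    exact mem_iUnion.mpr ⟨fun i => x i, x, fun i => rfl, rfl⟩
  · rw [← ENNReal.ofReal_pow hr0.le,
      ← ENNReal.ofReal_mul (div_pos two_pos (sub_pos.mpr hr1)).le]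
    refine ediam_le ?_
    rintro _ ⟨x, hx, rfl⟩ _ ⟨y, hy, rfl⟩
    rw [edist_dist, div_mul_eq_mul_div]
    exact ENNReal.ofReal_le_ofReal (dist_fourCorner_le hr0.le hr1
      fun m hm => (hx ⟨m, hm⟩).trans (hy ⟨m, hm⟩).symm)
  · rw [ENNReal.ofReal_rpow_of_pos hr0, hrd, one_div, ENNReal.ofReal_inv_of_pos (by norm_num)]
    simpa using ENNReal.mul_inv_cancel (a := 4) (by norm_num) (by norm_num)

theorem hausdorffMeasure_range_fourCorner_pos (hr0 : 0 < r) (hr : r < 1 / 2) {d : ℝ}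
    (hd : 0 < d) (hrd : r ^ d = 1 / 4) : 0 < μH[d] (range (fourCorner r)) := by
  have hγ : 0 < (1 - 2 * r) / (1 - r) := div_pos (by linarith) (by linarith)
  have hunit : 1 ≤ μH[1] (range (Real.ofDigits (b := 4))) := by
    calc (1 : ℝ≥0∞) = μH[1] (Icc (0 : ℝ) 1) := by simp [hausdorffMeasure_real]
      _ ≤ _ := measure_mono ((Real.ofDigits_SurjOn (b := 4) (by norm_num)).trans
          (image_subset_range _ _))
  have hholder := hausdorffMeasure_range_le_of_dist_le
    (C := ⟨_, (inv_pos.mpr (Real.rpow_pos_of_pos hγ d)).le⟩) (r := ⟨d, hd.le⟩) hd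
    (dist_ofDigits_le hr0 hr hd hrd) zero_le_one
  rw [mul_one] at hholder
  refine pos_iff_ne_zero.mpr fun h0 => one_ne_zero (le_zero_iff.mp (hunit.trans ?_))
  exact hholder.trans_eq (mul_eq_zero_of_right _ h0)

end

end FourCorner

theorem exists_rpow_eq_quarter {d : ℝ} (hd0 : 0 < d) (hd2 : d < 2) :
    ∃ r : ℝ, 0 < r ∧ r < 1 / 2 ∧ r ^ d = 1 / 4 := by
  refine ⟨(1 / 4) ^ d⁻¹, by positivity, ?_, Real.rpow_inv_rpow (by norm_num) hd0.ne'⟩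
  by_contra! h
  have h1 : (1 / 2 : ℝ) ^ (2 : ℝ) < (1 / 2) ^ d :=
    Real.rpow_lt_rpow_of_exponent_gt (by norm_num) (by norm_num) hd2
  have h2 := Real.rpow_le_rpow (by norm_num) h hd0.le
  rw [Real.rpow_inv_rpow (by norm_num) hd0.ne'] at h2
  norm_num at h1
  linarith

/-- For every `0 < d < 2` there exists a compact set `E ⊆ ℂ` whose `d`-dimensional
Hausdorff measure is strictly positive and finite. -/
theorem stmt14 (d : ℝ) (hd0 : 0 < d) (hd2 : d < 2) :
    ∃ E : Set ℂ, IsCompact E ∧ 0 < μH[d] E ∧ μH[d] E < ⊤ := by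
  obtain ⟨r, hr0, hr, hrd⟩ := exists_rpow_eq_quarter hd0 hd2
  have hr1 : r < 1 := by linarith
  exact ⟨range (FourCorner.fourCorner r),
    isCompact_range (FourCorner.continuous_fourCorner hr0.le hr1),
    FourCorner.hausdorffMeasure_range_fourCorner_pos hr0 hr hd0 hrd,
    (FourCorner.hausdorffMeasure_range_fourCorner_le hr0 hr1 hd0 hrd).trans_lt
      (ENNReal.rpow_lt_top_of_nonneg hd0.le ENNReal.ofReal_ne_top)⟩
end

section
/- Let 0 < d < 2 and t₀ ∈ (0,1), and let ε : (0, t₀) → (0, ∞) be a continuous strictly increasing function such that ε(t) → 0 as t → 0⁺, for every α > 0 one has t^α/ε(t) → 0 as t → 0⁺, and the function t ↦ ε(t)^{1/(2−d)}/t is nonincreasing on (0, t₀). Let h : [0, ∞) → [0, ∞) be any gauge function (continuous, nondecreasing, h(0) = 0, h(t) > 0 for t > 0) satisfying h(t) = t^d·ε(t) for all t ∈ (0, t₀). Then there exists a compact set E ⊆ ℂ such that the generalized Hausdorff measure of E with gauge h is strictly positive and finite: 0 < H^h(E) < ∞. -/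
/-!
The antitonicity of `ε(t)^(1/(2-d))/t` gives the doubling bound `h t ≤ 4 h (t/2)`, so by the
intermediate value theorem there are scales `L n` with `2 L (n+1) ≤ L n` and
`h (L n) = h (L 0) / 4^n`. Take for `E` the four-corner Cantor set: each generation-`n` square
of side `L n` keeps the four corner squares of side `L (n+1)`. Covering `E` by its `4^n`
generation-`n` squares gives `H^h(E) ≤ 4^n h(2 L n) ≤ 4 h(L 0)`. Conversely, the image of the
uniform measure on addresses gives each generation-`n` square mass `4^-n`, and a set of diameter
at most `L n` meets at most `16` of these squares since their interiors are disjoint; the mass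
distribution principle then gives `H^h(E) ≥ h(L 0) / 64`.
-/

open Set Filter Topology MeasureTheory
open scoped ENNReal

open Metric in
/-- Mass distribution principle along a sequence of scales `L n → 0`. -/
theorem le_mkMetric_of_forall_ediam_le {X : Type*} [EMetricSpace X] [MeasurableSpace X]
    [BorelSpace X] (μ : Measure X) {L : ℕ → ℝ} (hL₀ : ∀ n, 0 < L n)
    (hL : Tendsto L atTop (𝓝 0)) {h : ℝ → ℝ} (hmono : MonotoneOn h (Ici 0))
    (hcont : ContinuousWithinAt h (Ici 0) 0)
    (hμ : ∀ n (U : Set X), ediam U ≤ ENNReal.ofReal (L n) →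
      μ U ≤ ENNReal.ofReal (h (L (n + 1)))) :
    μ ≤ Measure.mkMetric fun r => ENNReal.ofReal (h r.toReal) := by
  have hL' : Tendsto (fun n => L (n + 1)) atTop (𝓝 0) := hL.comp (tendsto_add_atTop_nat 1)
  refine Measure.le_mkMetric _ μ (ENNReal.ofReal (L 0)) (ENNReal.ofReal_pos.2 (hL₀ 0))
    fun U hU => ?_
  rcases (zero_le : 0 ≤ ediam U).eq_or_lt with hU0 | hUpos
  · rw [← hU0, ENNReal.toReal_zero]
    have htend : Tendsto (fun n => ENNReal.ofReal (h (L (n + 1)))) atTop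
        (𝓝 (ENNReal.ofReal (h 0))) :=
      ENNReal.tendsto_ofReal <| hcont.tendsto.comp <|
        tendsto_nhdsWithin_iff.2 ⟨hL', Eventually.of_forall fun n => (hL₀ _).le⟩
    exact ge_of_tendsto' htend fun n => hμ n U (hU0 ▸ zero_le)
  · have hfin : ediam U ≠ ⊤ := ne_top_of_le_ne_top ENNReal.ofReal_ne_top hU
    have hL'' : Tendsto (fun n => ENNReal.ofReal (L (n + 1))) atTop (𝓝 0) := by
      simpa using ENNReal.tendsto_ofReal hL'
    have hex : ∃ n, ENNReal.ofReal (L (n + 1)) < ediam U :=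
      (hL''.eventually_lt_const hUpos).exists
    have hUn : ediam U ≤ ENNReal.ofReal (L (Nat.find hex)) := by
      rcases hn : Nat.find hex with _ | k
      · exact hU
      · exact not_lt.1 (Nat.find_min hex (by omega : k < Nat.find hex))
    calc μ U ≤ ENNReal.ofReal (h (L (Nat.find hex + 1))) := hμ _ U hUn
      _ ≤ ENNReal.ofReal (h (ediam U).toReal) := ENNReal.ofReal_le_ofReal <|
        hmono (hL₀ _).le ENNReal.toReal_nonneg
          ((ENNReal.ofReal_lt_iff_lt_toReal (hL₀ _).le hfin).1 (Nat.find_spec hex)).le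

lemma exists_mem_Ioc_eq_div_four {h : ℝ → ℝ} (hcont : ContinuousOn h (Ici 0)) (h0 : h 0 = 0)
    (hpos : ∀ t, 0 < t → 0 < h t) {t : ℝ} (ht : 0 < t) (hdbl : h t ≤ 4 * h (t / 2)) :
    ∃ s ∈ Ioc 0 (t / 2), h s = h t / 4 := by
  have hmem : h t / 4 ∈ Icc (h 0) (h (t / 2)) := ⟨by linarith [h0, hpos t ht], by linarith⟩
  obtain ⟨s, ⟨hs0, hs⟩, hhs⟩ := intermediate_value_Icc (by linarith : (0 : ℝ) ≤ t / 2)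
    (hcont.mono Icc_subset_Ici_self) hmem
  refine ⟨s, ⟨hs0.lt_of_ne ?_, hs⟩, hhs⟩
  rintro rfl
  linarith [h0, hpos t ht]

lemma exists_seq_gauge_div_four {h : ℝ → ℝ} (hcont : ContinuousOn h (Ici 0)) (h0 : h 0 = 0)
    (hpos : ∀ t, 0 < t → 0 < h t) {T : ℝ} (hT : 0 < T)
    (hdbl : ∀ t ∈ Ioo 0 T, h t ≤ 4 * h (t / 2)) :
    ∃ L : ℕ → ℝ, (∀ n, 0 < L n) ∧ (∀ n, 2 * L (n + 1) ≤ L n) ∧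
      (∀ n, h (2 * L n) ≤ 4 * h (L n)) ∧ ∀ n, h (L (n + 1)) = h (L n) / 4 := by
  have hstep : ∀ t ∈ Ioc 0 (T / 4), ∃ s ∈ Ioc 0 (T / 4), 2 * s ≤ t ∧ h s = h t / 4 := by
    rintro t ⟨ht0, htT⟩
    obtain ⟨s, ⟨hs0, hst⟩, hhs⟩ :=
      exists_mem_Ioc_eq_div_four hcont h0 hpos ht0 (hdbl t ⟨ht0, by linarith⟩)
    exact ⟨s, ⟨hs0, by linarith⟩, by linarith, hhs⟩
  choose! F hFmem hF2 hFh using hstep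
  set L : ℕ → ℝ := fun n => F^[n] (T / 4)
  have hLmem : ∀ n, L n ∈ Ioc 0 (T / 4) := by
    intro n
    induction n with
    | zero => exact ⟨show 0 < T / 4 by positivity, le_rfl⟩
    | succ n ih => simpa [L, Function.iterate_succ_apply'] using hFmem _ ih
  have hLsucc : ∀ n, L (n + 1) = F (L n) := fun n => Function.iterate_succ_apply' F n _
  refine ⟨L, fun n => (hLmem n).1, fun n => ?_, fun n => ?_, fun n => ?_⟩
  · rw [hLsucc]; exact hF2 _ (hLmem n)
  · have := hdbl (2 * L n) ⟨by linarith [(hLmem n).1], by linarith [(hLmem n).2]⟩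
    rwa [mul_div_cancel_left₀ _ two_ne_zero] at this
  · rw [hLsucc]; exact hFh _ (hLmem n)

namespace Complex

lemma volume_reProdIm {s t : Set ℝ} (hs : MeasurableSet s) (ht : MeasurableSet t) :
    volume (s ×ℂ t) = volume s * volume t := by
  rw [← preimage_equivRealProd_prod, ← Measure.prod_prod, ← Measure.volume_eq_prod]
  exact volume_preserving_equiv_real_prod.measure_preimage (hs.prod ht).nullMeasurableSet

end Complex

noncomputable section

namespace CornerCantor

open Complex Metric

def square (p : ℂ) (s : ℝ) : Set ℂ := Icc p.re (p.re + s) ×ℂ Icc p.im (p.im + s)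

def openSquare (p : ℂ) (s : ℝ) : Set ℂ := Ioo p.re (p.re + s) ×ℂ Ioo p.im (p.im + s)

lemma mem_square_self (p : ℂ) {s : ℝ} (hs : 0 ≤ s) : p ∈ square p s :=
  ⟨left_mem_Icc.2 (by linarith), left_mem_Icc.2 (by linarith)⟩

lemma isClosed_square (p : ℂ) (s : ℝ) : IsClosed (square p s) :=
  isClosed_Icc.reProdIm isClosed_Icc

lemma measurableSet_openSquare (p : ℂ) (s : ℝ) : MeasurableSet (openSquare p s) :=
  (isOpen_Ioo.reProdIm isOpen_Ioo).measurableSet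

lemma volume_openSquare (p : ℂ) (s : ℝ) : volume (openSquare p s) = ENNReal.ofReal s ^ 2 := by
  rw [openSquare, volume_reProdIm measurableSet_Ioo measurableSet_Ioo]
  simp [sq]

lemma ediam_square_le (p : ℂ) (s : ℝ) :
    ediam (square p s) ≤ ENNReal.ofReal (2 * s) := by
  refine ediam_le fun z hz z' hz' => ?_
  rw [edist_dist]
  refine ENNReal.ofReal_le_ofReal ?_
  obtain ⟨⟨x1, x2⟩, y1, y2⟩ := hz
  obtain ⟨⟨x1', x2'⟩, y1', y2'⟩ := hz'
  have hre : |z.re - z'.re| ≤ s := abs_sub_le_iff.2 ⟨by linarith, by linarith⟩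
  have him : |z.im - z'.im| ≤ s := abs_sub_le_iff.2 ⟨by linarith, by linarith⟩
  calc dist z z' ≤ |(z - z').re| + |(z - z').im| := by
        rw [dist_eq_norm]; exact norm_le_abs_re_add_abs_im _
    _ ≤ 2 * s := by rw [sub_re, sub_im]; linarith

lemma openSquare_subset_of_mem_square {p q u : ℂ} {s : ℝ} (hq : q ∈ square p s)
    (hqu : dist q u ≤ s) :
    openSquare p s ⊆ openSquare ⟨u.re - 2 * s, u.im - 2 * s⟩ (4 * s) := by
  have hre : |q.re - u.re| ≤ s := (abs_re_le_norm (q - u)).trans (by rwa [← dist_eq_norm])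
  have him : |q.im - u.im| ≤ s := (abs_im_le_norm (q - u)).trans (by rwa [← dist_eq_norm])
  rw [abs_sub_le_iff] at hre him
  obtain ⟨⟨q1, q2⟩, q3, q4⟩ := hq
  rintro z ⟨⟨z1, z2⟩, z3, z4⟩
  exact ⟨⟨by linarith, by linarith⟩, by linarith, by linarith⟩

/-- The open squares lie disjointly in one square of side `4 s`; comparing volumes counts them. -/
lemma card_le_sixteen_of_pairwiseDisjoint {ι : Type*} {S : Finset ι} {p : ι → ℂ} {s : ℝ}
    (hs : 0 < s) {U : Set ℂ} (hU : ediam U ≤ ENNReal.ofReal s)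
    (hdisj : (S : Set ι).PairwiseDisjoint fun i => openSquare (p i) s)
    (hmeet : ∀ i ∈ S, (square (p i) s ∩ U).Nonempty) : S.card ≤ 16 := by
  rcases S.eq_empty_or_nonempty with rfl | ⟨i₀, hi₀⟩
  · simp
  obtain ⟨u, -, hu⟩ := hmeet i₀ hi₀
  have hsub :
      ⋃ i ∈ S, openSquare (p i) s ⊆ openSquare ⟨u.re - 2 * s, u.im - 2 * s⟩ (4 * s) := by
    refine iUnion₂_subset fun i hi => ?_
    obtain ⟨q, hq, hqU⟩ := hmeet i hi
    exact openSquare_subset_of_mem_square hq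
      ((edist_le_ofReal hs.le).1 ((edist_le_ediam_of_mem hqU hu).trans hU))
  have hvol := measure_mono (μ := volume) hsub
  rw [measure_biUnion_finset hdisj fun i _ => measurableSet_openSquare _ _] at hvol
  simp only [volume_openSquare, Finset.sum_const, nsmul_eq_mul] at hvol
  rw [ENNReal.ofReal_mul (by norm_num), mul_pow, ENNReal.ofReal_ofNat] at hvol
  have h0 : ENNReal.ofReal s ^ 2 ≠ 0 := pow_ne_zero _ (ENNReal.ofReal_pos.2 hs).ne'
  have := (ENNReal.mul_le_mul_iff_left h0 (by simp)).1 hvol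
  norm_num at this
  exact_mod_cast this

def corner : Fin 4 → ℂ := ![0, 1, I, 1 + I]

lemma corner_re_mem (k : Fin 4) : (corner k).re ∈ Icc (0 : ℝ) 1 := by
  fin_cases k <;> simp [corner]

lemma corner_im_mem (k : Fin 4) : (corner k).im ∈ Icc (0 : ℝ) 1 := by
  fin_cases k <;> simp [corner]

lemma norm_corner_le (k : Fin 4) : ‖corner k‖ ≤ 2 :=
  (norm_le_abs_re_add_abs_im _).trans <| by
    rw [abs_of_nonneg (corner_re_mem k).1, abs_of_nonneg (corner_im_mem k).1]
    linarith [(corner_re_mem k).2, (corner_im_mem k).2]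

lemma one_le_abs_sub_corner {k k' : Fin 4} (hk : k ≠ k') :
    1 ≤ |(corner k).re - (corner k').re| ∨ 1 ≤ |(corner k).im - (corner k').im| := by
  fin_cases k <;> fin_cases k' <;> simp_all [corner]

lemma re_add_mul_corner (p : ℂ) (a : ℝ) (k : Fin 4) :
    (p + a * corner k).re = p.re + a * (corner k).re := by simp

lemma im_add_mul_corner (p : ℂ) (a : ℝ) (k : Fin 4) :
    (p + a * corner k).im = p.im + a * (corner k).im := by simp

lemma square_add_mul_corner_subset (p : ℂ) (k : Fin 4) {a s s' : ℝ} (ha : 0 ≤ a)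
    (has : a + s' ≤ s) : square (p + a * corner k) s' ⊆ square p s := by
  have hre := corner_re_mem k
  have him := corner_im_mem k
  rintro z ⟨⟨z1, z2⟩, z3, z4⟩
  rw [re_add_mul_corner] at z1 z2
  rw [im_add_mul_corner] at z3 z4
  exact ⟨⟨by nlinarith [hre.1], by nlinarith [hre.2]⟩,
    by nlinarith [him.1], by nlinarith [him.2]⟩

lemma openSquare_add_mul_corner_subset (p : ℂ) (k : Fin 4) {a s s' : ℝ} (ha : 0 ≤ a)
    (has : a + s' ≤ s) : openSquare (p + a * corner k) s' ⊆ openSquare p s := by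
  have hre := corner_re_mem k
  have him := corner_im_mem k
  rintro z ⟨⟨z1, z2⟩, z3, z4⟩
  rw [re_add_mul_corner] at z1 z2
  rw [im_add_mul_corner] at z3 z4
  exact ⟨⟨by nlinarith [hre.1], by nlinarith [hre.2]⟩,
    by nlinarith [him.1], by nlinarith [him.2]⟩

lemma disjoint_openSquare_add_mul_corner (p : ℂ) {k k' : Fin 4} (hk : k ≠ k') {a s : ℝ}
    (hsa : s ≤ a) :
    Disjoint (openSquare (p + a * corner k) s) (openSquare (p + a * corner k') s) := by
  refine Set.disjoint_left.2 fun z ⟨⟨z1, z2⟩, z3, z4⟩ ⟨⟨z1', z2'⟩, z3', z4'⟩ => ?_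
  rw [re_add_mul_corner] at z1 z2 z1' z2'
  rw [im_add_mul_corner] at z3 z4 z3' z4'
  have ha : 0 ≤ a := by linarith
  rcases one_le_abs_sub_corner hk with h | h
  · have : |a * ((corner k).re - (corner k').re)| < s := abs_lt.2 ⟨by linarith, by linarith⟩
    rw [abs_mul, abs_of_nonneg ha] at this
    nlinarith
  · have : |a * ((corner k).im - (corner k').im)| < s := abs_lt.2 ⟨by linarith, by linarith⟩
    rw [abs_mul, abs_of_nonneg ha] at this
    nlinarith

section Construction

variable (L : ℕ → ℝ)

def vertex (n : ℕ) (w : Fin n → Fin 4) : ℂ :=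
  ∑ j : Fin n, ((L j - L (j + 1) : ℝ) : ℂ) * corner (w j)

def point (ω : ℕ → Fin 4) : ℂ :=
  ∑' j, ((L j - L (j + 1) : ℝ) : ℂ) * corner (ω j)

def cantorSet : Set ℂ := range (point L)

variable {L}

lemma vertex_succ (n : ℕ) (w : Fin (n + 1) → Fin 4) :
    vertex L (n + 1) w =
      vertex L n (Fin.init w) + ((L n - L (n + 1) : ℝ) : ℂ) * corner (w (Fin.last n)) := by
  rw [vertex, Fin.sum_univ_castSucc]
  rfl

lemma square_vertex_succ_subset {n : ℕ} (hn : L (n + 1) ≤ L n) (w : Fin (n + 1) → Fin 4) :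
    square (vertex L (n + 1) w) (L (n + 1)) ⊆ square (vertex L n (Fin.init w)) (L n) := by
  rw [vertex_succ]
  exact square_add_mul_corner_subset _ _ (sub_nonneg.2 hn) (by linarith)

lemma openSquare_vertex_succ_subset {n : ℕ} (hn : L (n + 1) ≤ L n) (w : Fin (n + 1) → Fin 4) :
    openSquare (vertex L (n + 1) w) (L (n + 1)) ⊆ openSquare (vertex L n (Fin.init w)) (L n) := by
  rw [vertex_succ]
  exact openSquare_add_mul_corner_subset _ _ (sub_nonneg.2 hn) (by linarith)

def addressMeasure : Measure (ℕ → Fin 4) :=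
  Measure.infinitePi fun _ => (PMF.uniformOfFintype (Fin 4)).toMeasure

instance : IsProbabilityMeasure addressMeasure := by
  unfold addressMeasure
  infer_instance

lemma addressMeasure_cylinder (n : ℕ) (ω : ℕ → Fin 4) :
    addressMeasure {ω' | ω' ∘ (Fin.val : Fin n → ℕ) = ω ∘ Fin.val} = 4⁻¹ ^ n := by
  have hpi : {ω' | ω' ∘ (Fin.val : Fin n → ℕ) = ω ∘ Fin.val} =
      (Finset.range n : Set ℕ).pi fun i => {ω i} := by
    ext ω'
    simp [funext_iff, Fin.forall_iff]
  rw [hpi, addressMeasure, Measure.infinitePi_pi _ fun i _ => measurableSet_singleton _]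
  simp [PMF.uniformOfFintype_apply]

variable (hL₀ : ∀ n, 0 < L n) (hL : ∀ n, 2 * L (n + 1) ≤ L n)
include hL₀ hL

lemma succ_le_self (n : ℕ) : L (n + 1) ≤ L n := by linarith [hL n, hL₀ (n + 1)]

lemma pairwiseDisjoint_openSquare_vertex (n : ℕ) :
    (univ : Set (Fin n → Fin 4)).PairwiseDisjoint fun w => openSquare (vertex L n w) (L n) := by
  induction n with
  | zero => exact fun w _ w' _ hne => absurd (Subsingleton.elim w w') hne
  | succ n ih =>
    intro w _ w' _ hne
    by_cases hinit : Fin.init w = Fin.init w'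
    · have hlast : w (Fin.last n) ≠ w' (Fin.last n) := fun h => hne <| by
        rw [← Fin.snoc_init_self w, ← Fin.snoc_init_self w', hinit, h]
      simp only [Function.onFun, vertex_succ, hinit]
      exact disjoint_openSquare_add_mul_corner _ hlast (by linarith [hL n])
    · have hn := succ_le_self hL₀ hL n
      exact (ih (mem_univ _) (mem_univ _) hinit).mono (openSquare_vertex_succ_subset hn w)
        (openSquare_vertex_succ_subset hn w')

lemma tendsto_zero_of_two_mul_succ_le : Tendsto L atTop (𝓝 0) := by
  have hgeom : ∀ n, L n ≤ L 0 * (1 / 2) ^ n := by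
    intro n
    induction n with
    | zero => simp
    | succ n ih => rw [pow_succ]; linarith [hL n]
  refine squeeze_zero (fun n => (hL₀ n).le) hgeom ?_
  simpa using (tendsto_pow_atTop_nhds_zero_of_lt_one (by norm_num : (0 : ℝ) ≤ 1 / 2)
    (by norm_num)).const_mul (L 0)

lemma summable_sub_succ : Summable fun j => L j - L (j + 1) := by
  refine summable_of_sum_range_le (c := L 0) (fun j => sub_nonneg.2 (succ_le_self hL₀ hL j))
    fun n => ?_
  rw [Finset.sum_range_sub']
  linarith [(hL₀ n).le]

lemma norm_mul_corner_le (j : ℕ) (k : Fin 4) :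
    ‖((L j - L (j + 1) : ℝ) : ℂ) * corner k‖ ≤ 2 * (L j - L (j + 1)) := by
  have ha := sub_nonneg.2 (succ_le_self hL₀ hL j)
  rw [norm_mul, norm_real, Real.norm_of_nonneg ha, mul_comm]
  exact mul_le_mul_of_nonneg_right (norm_corner_le k) ha

lemma continuous_point : Continuous (point L) :=
  continuous_tsum (fun j => continuous_const.mul
      (continuous_of_discreteTopology.comp (continuous_apply j)))
    ((summable_sub_succ hL₀ hL).mul_left 2) fun j ω => norm_mul_corner_le hL₀ hL j (ω j)

lemma isCompact_cantorSet : IsCompact (cantorSet L) :=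
  isCompact_range (continuous_point hL₀ hL)

lemma tendsto_vertex_point (ω : ℕ → Fin 4) :
    Tendsto (fun n => vertex L n (ω ∘ Fin.val)) atTop (𝓝 (point L ω)) := by
  have hsum := (summable_sub_succ hL₀ hL).mul_left 2 |>.of_norm_bounded
    fun j => norm_mul_corner_le hL₀ hL j (ω j)
  simpa only [point, vertex, Function.comp_apply, Fin.sum_univ_eq_sum_range
    (fun j => ((L j - L (j + 1) : ℝ) : ℂ) * corner (ω j))] using hsum.hasSum.tendsto_sum_nat

lemma square_vertex_subset_of_le (ω : ℕ → Fin 4) {m n : ℕ} (hnm : n ≤ m) :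
    square (vertex L m (ω ∘ Fin.val)) (L m) ⊆ square (vertex L n (ω ∘ Fin.val)) (L n) := by
  induction m, hnm using Nat.le_induction with
  | base => rfl
  | succ m _ ih =>
    exact (square_vertex_succ_subset (succ_le_self hL₀ hL m) (ω ∘ Fin.val)).trans ih

lemma point_mem_square (ω : ℕ → Fin 4) (n : ℕ) :
    point L ω ∈ square (vertex L n (ω ∘ Fin.val)) (L n) := by
  refine (isClosed_square _ _).mem_of_tendsto (tendsto_vertex_point hL₀ hL ω)
    (eventually_atTop.2 ⟨n, fun m hm => square_vertex_subset_of_le hL₀ hL ω hm ?_⟩)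
  exact mem_square_self _ (hL₀ m).le

lemma addressMeasure_preimage_point_le (n : ℕ) {U : Set ℂ}
    (hU : ediam U ≤ ENNReal.ofReal (L n)) :
    addressMeasure (point L ⁻¹' U) ≤ 16 * 4⁻¹ ^ n := by
  classical
  set T := Finset.univ.filter fun w : Fin n → Fin 4 =>
    ∃ ω ∈ point L ⁻¹' U, ω ∘ Fin.val = w
  have hcard : T.card ≤ 16 := by
    refine card_le_sixteen_of_pairwiseDisjoint (p := vertex L n) (hL₀ n) hU
      ((pairwiseDisjoint_openSquare_vertex hL₀ hL n).subset (subset_univ _)) fun w hw => ?_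
    obtain ⟨ω, hωU, rfl⟩ := (Finset.mem_filter.1 hw).2
    exact ⟨_, point_mem_square hL₀ hL ω n, hωU⟩
  calc addressMeasure (point L ⁻¹' U)
      ≤ addressMeasure (⋃ w ∈ T, {ω | ω ∘ Fin.val = w}) :=
        measure_mono fun ω hω => mem_biUnion (by simpa [T] using ⟨ω, hω, rfl⟩) rfl
    _ ≤ ∑ w ∈ T, addressMeasure {ω | ω ∘ Fin.val = w} := measure_biUnion_finset_le _ _
    _ = ∑ w ∈ T, 4⁻¹ ^ n := Finset.sum_congr rfl fun w hw => by
        obtain ⟨ω, -, rfl⟩ := (Finset.mem_filter.1 hw).2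
        exact addressMeasure_cylinder n ω
    _ ≤ 16 * 4⁻¹ ^ n := by
        rw [Finset.sum_const, nsmul_eq_mul]
        gcongr
        exact_mod_cast hcard

lemma mkMetric_cantorSet_le {h : ℝ → ℝ} (hmono : MonotoneOn h (Ici 0)) :
    Measure.mkMetric (fun r : ℝ≥0∞ => ENNReal.ofReal (h r.toReal)) (cantorSet L) ≤
      liminf (fun n => 4 ^ n * ENNReal.ofReal (h (2 * L n))) atTop := by
  have hr : Tendsto (fun n => ENNReal.ofReal (2 * L n)) atTop (𝓝 0) := by
    simpa using ENNReal.tendsto_ofReal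
      ((tendsto_zero_of_two_mul_succ_le hL₀ hL).const_mul 2)
  refine (Measure.mkMetric_le_liminf_sum (cantorSet L) _ hr
    (fun n (w : Fin n → Fin 4) => square (vertex L n w) (L n))
    (Eventually.of_forall fun n w => ediam_square_le _ _)
    (Eventually.of_forall fun n => ?_) _).trans
    (liminf_le_liminf (Eventually.of_forall fun n => ?_))
  · rintro _ ⟨ω, rfl⟩
    exact mem_iUnion.2 ⟨_, point_mem_square hL₀ hL ω n⟩
  · calc ∑ w : Fin n → Fin 4, ENNReal.ofReal (h (ediam (square (vertex L n w) (L n))).toReal)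
        ≤ ∑ _w : Fin n → Fin 4, ENNReal.ofReal (h (2 * L n)) :=
          Finset.sum_le_sum fun w _ => ENNReal.ofReal_le_ofReal <|
            hmono ENNReal.toReal_nonneg (by simpa using by linarith [(hL₀ n).le])
              (ENNReal.toReal_le_of_le_ofReal (by linarith [(hL₀ n).le]) (ediam_square_le _ _))
      _ = 4 ^ n * ENNReal.ofReal (h (2 * L n)) := by simp

lemma map_point_le (n : ℕ) {U : Set ℂ} (hU : ediam U ≤ ENNReal.ofReal (L n)) :
    addressMeasure.map (point L) U ≤ 16 * 4⁻¹ ^ n :=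
  calc addressMeasure.map (point L) U ≤ addressMeasure.map (point L) (closure U) :=
        measure_mono subset_closure
    _ = addressMeasure (point L ⁻¹' closure U) :=
        Measure.map_apply (continuous_point hL₀ hL).measurable isClosed_closure.measurableSet
    _ ≤ 16 * 4⁻¹ ^ n := addressMeasure_preimage_point_le hL₀ hL n (by rwa [ediam_closure])

lemma mkMetric_cantorSet_pos {h : ℝ → ℝ} (hcont : ContinuousWithinAt h (Ici 0) 0)
    (hmono : MonotoneOn h (Ici 0)) (hpos : 0 < h (L 0)) (hLh : ∀ n, h (L n) = h (L 0) / 4 ^ n) :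
    0 < Measure.mkMetric (fun r : ℝ≥0∞ => ENNReal.ofReal (h r.toReal)) (cantorSet L) := by
  -- mass at most `16 * 4⁻¹ ^ n` against gauge at least `h (L 0) / 4 ^ (n + 1)`
  set c := ENNReal.ofReal (h (L 0) / 64)
  have hle : c • addressMeasure.map (point L) ≤
      Measure.mkMetric fun r : ℝ≥0∞ => ENNReal.ofReal (h r.toReal) := by
    refine le_mkMetric_of_forall_ediam_le _ hL₀ (tendsto_zero_of_two_mul_succ_le hL₀ hL) hmono
      hcont fun n U hU => ?_
    have hval : h (L (n + 1)) = h (L 0) / 64 * (16 * 4⁻¹ ^ n) := by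
      rw [hLh, inv_pow]; field_simp; ring
    rw [Measure.smul_apply, smul_eq_mul, hval, ENNReal.ofReal_mul (by positivity),
      ENNReal.ofReal_mul (by norm_num), ENNReal.ofReal_pow (by norm_num),
      ENNReal.ofReal_inv_of_pos (by norm_num)]
    simpa using mul_le_mul_right (map_point_le hL₀ hL n hU) c
  calc 0 < c := ENNReal.ofReal_pos.2 (by positivity)
    _ = c * addressMeasure (point L ⁻¹' cantorSet L) := by simp [cantorSet]
    _ ≤ c * addressMeasure.map (point L) (cantorSet L) :=
        mul_le_mul_right (Measure.le_map_apply (continuous_point hL₀ hL).aemeasurable _) c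
    _ ≤ _ := hle _

lemma mkMetric_cantorSet_lt_top {h : ℝ → ℝ} (hmono : MonotoneOn h (Ici 0))
    (hLh : ∀ n, h (L n) = h (L 0) / 4 ^ n) (h2L : ∀ n, h (2 * L n) ≤ 4 * h (L n)) :
    Measure.mkMetric (fun r : ℝ≥0∞ => ENNReal.ofReal (h r.toReal)) (cantorSet L) < ⊤ := by
  refine (mkMetric_cantorSet_le hL₀ hL hmono).trans_lt <| lt_of_le_of_lt
    ((liminf_le_liminf (Eventually.of_forall fun n => ?_)).trans (liminf_const _).le)
    (ENNReal.ofReal_lt_top (r := 4 * h (L 0)))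
  rw [← ENNReal.ofReal_ofNat 4, ← ENNReal.ofReal_pow (by norm_num),
    ← ENNReal.ofReal_mul (by positivity)]
  refine ENNReal.ofReal_le_ofReal ?_
  calc 4 ^ n * h (2 * L n) ≤ 4 ^ n * (4 * h (L n)) := by gcongr; exact h2L n
    _ = 4 * h (L 0) := by rw [hLh]; field_simp

end Construction

end CornerCantor

end

open CornerCantor in
theorem exists_isCompact_mkMetric_pos_lt_top_of_doubling {h : ℝ → ℝ}
    (hcont : ContinuousOn h (Ici 0)) (hmono : MonotoneOn h (Ici 0)) (h0 : h 0 = 0)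
    (hpos : ∀ t, 0 < t → 0 < h t) {T : ℝ} (hT : 0 < T)
    (hdbl : ∀ t ∈ Ioo 0 T, h t ≤ 4 * h (t / 2)) :
    ∃ E : Set ℂ, IsCompact E ∧
      0 < Measure.mkMetric (fun r : ℝ≥0∞ => ENNReal.ofReal (h r.toReal)) E ∧
      Measure.mkMetric (fun r : ℝ≥0∞ => ENNReal.ofReal (h r.toReal)) E < ⊤ := by
  obtain ⟨L, hL₀, hL, h2L, hLq⟩ := exists_seq_gauge_div_four hcont h0 hpos hT hdbl
  have hLh : ∀ n, h (L n) = h (L 0) / 4 ^ n := by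
    intro n
    induction n with
    | zero => simp
    | succ n ih => rw [hLq, ih, pow_succ, div_div]
  exact ⟨cantorSet L, isCompact_cantorSet hL₀ hL,
    mkMetric_cantorSet_pos hL₀ hL (hcont.continuousWithinAt self_mem_Ici) hmono
      (hpos _ (hL₀ 0)) hLh,
    mkMetric_cantorSet_lt_top hL₀ hL hmono hLh h2L⟩

lemma rpow_mul_le_four_mul_half {d t₀ : ℝ} {ε : ℝ → ℝ} (hd2 : d < 2)
    (hεpos : ∀ t ∈ Ioo 0 t₀, 0 < ε t)
    (hεanti : AntitoneOn (fun t => ε t ^ (1 / (2 - d)) / t) (Ioo 0 t₀)) {t : ℝ}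
    (ht : t ∈ Ioo 0 t₀) : t ^ d * ε t ≤ 4 * ((t / 2) ^ d * ε (t / 2)) := by
  obtain ⟨ht0, htt₀⟩ := ht
  have ht2 : t / 2 ∈ Ioo 0 t₀ := ⟨by linarith, by linarith⟩
  have hd : 0 < 2 - d := by linarith
  have hε := hεpos t ⟨ht0, htt₀⟩
  have hε2 := hεpos _ ht2
  have hroot : ε t ^ (2 - d)⁻¹ ≤ 2 * ε (t / 2) ^ (2 - d)⁻¹ := by
    have := hεanti ht2 ⟨ht0, htt₀⟩ (by linarith)
    simp only [one_div] at this
    rw [div_le_div_iff₀ ht0 (by linarith)] at this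
    nlinarith [Real.rpow_pos_of_pos hε2 (2 - d)⁻¹]
  have hεle : ε t ≤ 2 ^ (2 - d) * ε (t / 2) := by
    have := Real.rpow_le_rpow (by positivity) hroot hd.le
    rwa [Real.rpow_inv_rpow hε.le hd.ne', Real.mul_rpow (by norm_num) (by positivity),
      Real.rpow_inv_rpow hε2.le hd.ne'] at this
  have hpow : t ^ d * 2 ^ (2 - d) = 4 * (t / 2) ^ d := by
    rw [Real.div_rpow ht0.le (by norm_num), Real.rpow_sub (by norm_num)]
    field_simp
    norm_num
  calc t ^ d * ε t ≤ t ^ d * (2 ^ (2 - d) * ε (t / 2)) := by gcongr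
    _ = 4 * ((t / 2) ^ d * ε (t / 2)) := by rw [← mul_assoc, hpow, mul_assoc]

theorem stmt16_general (d t₀ : ℝ) (hd2 : d < 2) (ht₀0 : 0 < t₀)
    (ε : ℝ → ℝ)
    (hεpos : ∀ t ∈ Ioo 0 t₀, 0 < ε t)
    (hεanti : AntitoneOn (fun t => ε t ^ (1 / (2 - d)) / t) (Ioo 0 t₀))
    (h : ℝ → ℝ)
    (hcont : ContinuousOn h (Ici 0)) (hmono : MonotoneOn h (Ici 0))
    (h0 : h 0 = 0) (hpos : ∀ t : ℝ, 0 < t → 0 < h t)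
    (hh : ∀ t ∈ Ioo 0 t₀, h t = t ^ d * ε t) :
    ∃ E : Set ℂ, IsCompact E ∧
      0 < (Measure.mkMetric (fun r : ℝ≥0∞ => ENNReal.ofReal (h r.toReal)) : Measure ℂ) E ∧
      (Measure.mkMetric (fun r : ℝ≥0∞ => ENNReal.ofReal (h r.toReal)) : Measure ℂ) E < ⊤ := by
  refine exists_isCompact_mkMetric_pos_lt_top_of_doubling hcont hmono h0 hpos ht₀0 fun t ht => ?_
  rw [hh t ht, hh (t / 2) ⟨by linarith [ht.1], by linarith [ht.1, ht.2]⟩]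
  exact rpow_mul_le_four_mul_half hd2 hεpos hεanti ht

/-- Case (b) of Theorem 4.1 (source-set part): for `0 < d < 2`, `t₀ ∈ (0,1)`, a continuous
strictly increasing `ε : (0,t₀) → (0,∞)` with `ε(t) → 0` as `t → 0⁺`, `t^α/ε(t) → 0` as
`t → 0⁺` for every `α > 0`, and `t ↦ ε(t)^(1/(2-d))/t` nonincreasing on `(0,t₀)`, and for any
gauge function `h` with `h(t) = t^d·ε(t)` on `(0,t₀)`, there exists a compact set `E ⊆ ℂ`
whose generalized Hausdorff measure with gauge `h` is strictly positive and finite. -/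
theorem stmt16 (d t₀ : ℝ) (hd0 : 0 < d) (hd2 : d < 2) (ht₀0 : 0 < t₀) (ht₀1 : t₀ < 1)
    (ε : ℝ → ℝ) (hεcont : ContinuousOn ε (Ioo 0 t₀))
    (hεpos : ∀ t ∈ Ioo 0 t₀, 0 < ε t)
    (hεmono : StrictMonoOn ε (Ioo 0 t₀))
    (hεlim : Tendsto ε (𝓝[>] 0) (𝓝 0))
    (hεsmall : ∀ α : ℝ, 0 < α → Tendsto (fun t => t ^ α / ε t) (𝓝[>] 0) (𝓝 0))
    (hεanti : AntitoneOn (fun t => ε t ^ (1 / (2 - d)) / t) (Ioo 0 t₀))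
    (h : ℝ → ℝ)
    (hcont : ContinuousOn h (Ici 0)) (hmono : MonotoneOn h (Ici 0))
    (h0 : h 0 = 0) (hpos : ∀ t : ℝ, 0 < t → 0 < h t)
    (hh : ∀ t ∈ Ioo 0 t₀, h t = t ^ d * ε t) :
    ∃ E : Set ℂ, IsCompact E ∧
      0 < (Measure.mkMetric (fun r : ℝ≥0∞ => ENNReal.ofReal (h r.toReal)) : Measure ℂ) E ∧
      (Measure.mkMetric (fun r : ℝ≥0∞ => ENNReal.ofReal (h r.toReal)) : Measure ℂ) E < ⊤ :=
  stmt16_general d t₀ hd2 ht₀0 ε hεpos hεanti h hcont hmono h0 hpos hh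
end
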